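/- arXiv:2206.08550 — 10 statements merged into one kernel-verified Lean document; each statement's English description precedes it below -/
import Mathlib

section
/- Suppose c_l ≠ 0 for some 1 ≤ l ≤ L. Then the derivative at the point θ̇ of the map ℝ^{2(L+1)} → ℝ², θ̇ ↦ (Θ_1, Θ_2), is a surjective linear map; equivalently, the Jacobian matrix ∂(Θ_1, Θ_2)/∂θ̇ has rank 2. -/
open ContinuousLinearMap in
lemma stmt_0_aux (N : ℕ) (θ : (Fin N → ℝ) × (Fin N → ℝ)) (i0 : Fin N)
    (hi0 : θ.1 i0 + θ.2 i0 ≠ 0) :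
    Function.Surjective
      (fderiv ℝ
        (fun θ' : (Fin N → ℝ) × (Fin N → ℝ) =>
          ((∑ i, (θ'.1 i + θ'.2 i),
            ∑ i, ((θ'.2 i) ^ 2 - (θ'.1 i) ^ 2) / 2) : ℝ × ℝ)) θ) := by
  classical
  let P1 : ∀ i : Fin N, ((Fin N → ℝ) × (Fin N → ℝ)) →L[ℝ] ℝ := fun i =>
    (proj i).comp (fst ℝ (Fin N → ℝ) (Fin N → ℝ))
  let P2 : ∀ i : Fin N, ((Fin N → ℝ) × (Fin N → ℝ)) →L[ℝ] ℝ := fun i =>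
    (proj i).comp (snd ℝ (Fin N → ℝ) (Fin N → ℝ))
  have hD : HasFDerivAt
      (fun θ' : (Fin N → ℝ) × (Fin N → ℝ) =>
          ((∑ i, (θ'.1 i + θ'.2 i),
            ∑ i, ((θ'.2 i) ^ 2 - (θ'.1 i) ^ 2) / 2) : ℝ × ℝ))
      ((∑ i : Fin N, (P1 i + P2 i)).prod
       (∑ i : Fin N, (θ.2 i • P2 i - θ.1 i • P1 i))) θ := by
    apply HasFDerivAt.prodMk
    · exact HasFDerivAt.fun_sum fun i _ => ((P1 i).hasFDerivAt.add (P2 i).hasFDerivAt)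
    · apply HasFDerivAt.fun_sum
      intro i _
      have hy := ((P2 i).hasFDerivAt (x := θ)).fun_mul ((P2 i).hasFDerivAt (x := θ))
      have hx := ((P1 i).hasFDerivAt (x := θ)).fun_mul ((P1 i).hasFDerivAt (x := θ))
      have h := (hy.fun_sub hx).const_mul ((2:ℝ)⁻¹)
      have heqf : (fun y : (Fin N → ℝ) × (Fin N → ℝ) =>
          (2:ℝ)⁻¹ * ((P2 i) y * (P2 i) y - (P1 i) y * (P1 i) y))
          = fun θ' : (Fin N → ℝ) × (Fin N → ℝ) => ((θ'.2 i)^2 - (θ'.1 i)^2) / 2 := by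
        funext θ'; simp [P1, P2]; ring
      rw [heqf] at h
      refine h.congr_fderiv ?_
      ext v <;> simp [P1, P2, smul_eq_mul] <;> ring
  rw [hD.fderiv]
  rintro ⟨a, b⟩
  set x := θ.1 i0 with hxdef
  set y := θ.2 i0 with hydef
  have hxy : x + y ≠ 0 := hi0
  set t : ℝ := (b + x*a)/(x+y) with htdef
  set s : ℝ := a - t with hsdef
  refine ⟨(Pi.single i0 s, Pi.single i0 t), ?_⟩
  have hs1 : ∀ (u : ℝ), ∑ i, (Pi.single i0 u : Fin N → ℝ) i = u := by
    intro u; simp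
  have hs2 : ∀ (w : Fin N → ℝ) (u : ℝ),
      ∑ i, w i * (Pi.single i0 u : Fin N → ℝ) i = w i0 * u := by
    intro w u
    rw [Finset.sum_eq_single_of_mem i0 (Finset.mem_univ i0)]
    · simp
    · intro i _ hne
      simp [Pi.single_eq_of_ne hne]
  simp only [ContinuousLinearMap.prod_apply, ContinuousLinearMap.coe_sum',
    Finset.sum_apply, ContinuousLinearMap.add_apply, ContinuousLinearMap.coe_comp',
    ContinuousLinearMap.coe_fst', ContinuousLinearMap.coe_snd', Function.comp_apply,
    ContinuousLinearMap.proj_apply, ContinuousLinearMap.smul_apply,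
    ContinuousLinearMap.sub_apply, smul_eq_mul, Prod.mk.injEq, P1, P2]
  constructor
  · rw [Finset.sum_add_distrib, hs1, hs1, hsdef]; ring
  · rw [Finset.sum_sub_distrib, hs2, hs2, hsdef, htdef]
    field_simp
    ring

/-!
STATEMENT 0: If `c l ≠ 0` for some `1 ≤ l ≤ L`, then the derivative at `θ̇` of the map
`θ̇ ↦ (Θ₁, Θ₂)` from `ℝ^{2(L+1)}` to `ℝ²` is surjective (the Jacobian has rank 2).
Here `θ̇ = (θ̇_{l,0}, θ̇_{l,∞})_{1 ≤ l ≤ L+1}` (indexed below by `Fin (L+1)`, shifting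
the paper's index `l` to `l - 1`), `Θ₁ = Σ (θ̇_{l,0} + θ̇_{l,∞})`,
`Θ₂ = Σ (θ̇_{l,∞}² - θ̇_{l,0}²)/2`, and `c` is defined recursively by
`n_l c_l = n_{l-1} c_{l-1} + θ̇_{l,0} + θ̇_{l,∞}` with `c 0 = 0`.
-/
theorem stmt_0 (L : ℕ) (hL : 1 ≤ L) (n : ℕ → ℕ)
    (hn : ∀ l, 1 ≤ l → l ≤ L → 0 < n l)
    (θ : (Fin (L + 1) → ℝ) × (Fin (L + 1) → ℝ))
    (c : ℕ → ℝ) (hc0 : c 0 = 0)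
    (hc : ∀ l (h1 : 1 ≤ l) (h2 : l ≤ L),
      (n l : ℝ) * c l = (n (l - 1) : ℝ) * c (l - 1)
        + θ.1 ⟨l - 1, by omega⟩ + θ.2 ⟨l - 1, by omega⟩)
    (hcne : ∃ l, 1 ≤ l ∧ l ≤ L ∧ c l ≠ 0) :
    Function.Surjective
      (fderiv ℝ
        (fun θ' : (Fin (L + 1) → ℝ) × (Fin (L + 1) → ℝ) =>
          ((∑ i, (θ'.1 i + θ'.2 i),
            ∑ i, ((θ'.2 i) ^ 2 - (θ'.1 i) ^ 2) / 2) : ℝ × ℝ)) θ) := by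
  have key : ∃ i : Fin (L+1), θ.1 i + θ.2 i ≠ 0 := by
    by_contra hcon
    push_neg at hcon
    obtain ⟨l, hl1, hl2, hcl⟩ := hcne
    have hzero : ∀ m, m ≤ L → c m = 0 := by
      intro m
      induction m with
      | zero => intro _; exact hc0
      | succ k ih =>
        intro hk
        have h1 : 1 ≤ k + 1 := by omega
        have heq := hc (k+1) h1 hk
        simp only [Nat.add_sub_cancel] at heq
        rw [ih (by omega)] at heq
        have h0 := hcon ⟨k, by omega⟩
        have hnpos : (0:ℝ) < n (k+1) := by exact_mod_cast hn (k+1) h1 hk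
        have hmul : (n (k+1) : ℝ) * c (k+1) = 0 := by rw [heq]; linarith
        exact (mul_eq_zero.mp hmul).resolve_left (ne_of_gt hnpos)
    exact hcl (hzero l hl2)
  obtain ⟨i0, hi0⟩ := key
  exact stmt_0_aux (L+1) θ i0 hi0
end

section
/- Suppose the residue conditions −n_l c_l + n_{l−1} c_{l−1} + θ̇_{l,0} + θ̇_{l,∞} = 0 hold for all 1 ≤ l ≤ L+1 (with conventions n_0 = n_{L+1} = 0 and c_0 = c_{L+1} = 0). Then the total force satisfies Σ_{l=1}^{L} Σ_{k=1}^{n_l} F_{l,k} = Σ_{l=1}^{L+1} (θ̇_{l,∞}² − θ̇_{l,0}²)/2. -/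
/-- The force `F_{l,k}` of a configuration: `q l k` is the position of neck `k`
on layer `l`, `c l` the residue parameter of layer `l`, `θ0 l` the parameter
`θ̇_{l,0}` of the end `0_l`. -/
noncomputable def force (n : ℕ → ℕ) (c : ℕ → ℝ) (θ0 : ℕ → ℝ)
    (q : ℕ → ℕ → ℂ) (l k : ℕ) : ℂ :=
  (∑ j ∈ (Finset.Icc 1 (n l)).erase k, 2 * (c l : ℂ) ^ 2 * q l k / (q l k - q l j))
    - (∑ j ∈ Finset.Icc 1 (n (l + 1)),
        (c l : ℂ) * (c (l + 1) : ℂ) * q l k / (q l k - q (l + 1) j))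
    - (∑ j ∈ Finset.Icc 1 (n (l - 1)),
        (c l : ℂ) * (c (l - 1) : ℂ) * q l k / (q l k - q (l - 1) j))
    + (c l : ℂ) ^ 2 + (c l : ℂ) * ((θ0 (l + 1) : ℂ) - (θ0 l : ℂ))

noncomputable def dsum1 (n : ℕ → ℕ) (q : ℕ → ℕ → ℂ) (l : ℕ) : ℂ :=
  ∑ k ∈ Finset.Icc 1 (n l), ∑ j ∈ (Finset.Icc 1 (n l)).erase k, q l k / (q l k - q l j)

noncomputable def dsum2 (n : ℕ → ℕ) (q : ℕ → ℕ → ℂ) (l : ℕ) : ℂ :=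
  ∑ k ∈ Finset.Icc 1 (n l), ∑ j ∈ Finset.Icc 1 (n (l + 1)), q l k / (q l k - q (l + 1) j)

noncomputable def dsum3 (n : ℕ → ℕ) (q : ℕ → ℕ → ℂ) (l : ℕ) : ℂ :=
  ∑ k ∈ Finset.Icc 1 (n l), ∑ j ∈ Finset.Icc 1 (n (l - 1)), q l k / (q l k - q (l - 1) j)

lemma pair_frac {a b : ℂ} (h : a ≠ b) : a / (a - b) + b / (b - a) = 1 := by
  have h1 : a - b ≠ 0 := sub_ne_zero.mpr h
  have h2 : b - a ≠ 0 := sub_ne_zero.mpr (Ne.symm h)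
  field_simp
  ring

lemma cross_pair {ι κ : Type*} (s : Finset ι) (t : Finset κ) (x : ι → ℂ) (y : κ → ℂ)
    (h : ∀ k ∈ s, ∀ j ∈ t, x k ≠ y j) :
    (∑ k ∈ s, ∑ j ∈ t, x k / (x k - y j)) + (∑ k ∈ t, ∑ j ∈ s, y k / (y k - x j))
      = (s.card : ℂ) * t.card := by
  have hswap : (∑ k ∈ t, ∑ j ∈ s, y k / (y k - x j))
      = ∑ j ∈ s, ∑ k ∈ t, y k / (y k - x j) := Finset.sum_comm
  rw [hswap, ← Finset.sum_add_distrib]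
  have h1 : ∀ k ∈ s, ((∑ j ∈ t, x k / (x k - y j)) + ∑ j ∈ t, y j / (y j - x k))
      = (t.card : ℂ) := by
    intro k hk
    rw [← Finset.sum_add_distrib,
      Finset.sum_congr rfl (fun j hj => pair_frac (h k hk j hj)), Finset.sum_const,
      nsmul_eq_mul, mul_one]
  rw [Finset.sum_congr rfl h1, Finset.sum_const, nsmul_eq_mul]

lemma self_pair {ι : Type*} [DecidableEq ι] (s : Finset ι) (x : ι → ℂ)
    (h : ∀ k ∈ s, ∀ j ∈ s, k ≠ j → x k ≠ x j) :
    (∑ k ∈ s, ∑ j ∈ s.erase k, x k / (x k - x j))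
      + (∑ k ∈ s, ∑ j ∈ s.erase k, x k / (x k - x j))
      = (s.card : ℂ) * ((s.card : ℂ) - 1) := by
  have hswap : (∑ k ∈ s, ∑ j ∈ s.erase k, x k / (x k - x j))
      = ∑ k ∈ s, ∑ j ∈ s.erase k, x j / (x j - x k) := by
    refine Finset.sum_comm' ?_
    intro k j
    simp only [Finset.mem_erase]
    constructor
    · rintro ⟨h1, h2, h3⟩
      exact ⟨⟨Ne.symm h2, h1⟩, h3⟩
    · rintro ⟨⟨h1, h2⟩, h3⟩
      exact ⟨h2, Ne.symm h1, h3⟩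
  nth_rewrite 2 [hswap]
  rw [← Finset.sum_add_distrib]
  have hinner : ∀ k ∈ s, ((∑ j ∈ s.erase k, x k / (x k - x j))
      + ∑ j ∈ s.erase k, x j / (x j - x k)) = (s.card : ℂ) - 1 := by
    intro k hk
    rw [← Finset.sum_add_distrib]
    have h2 : ∀ j ∈ s.erase k, x k / (x k - x j) + x j / (x j - x k) = 1 := by
      intro j hj
      obtain ⟨hjk, hjs⟩ := Finset.mem_erase.mp hj
      exact pair_frac (h k hk j hjs (Ne.symm hjk))
    rw [Finset.sum_congr rfl h2, Finset.sum_const, nsmul_eq_mul, mul_one,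
      Finset.cast_card_erase_of_mem hk]
  rw [Finset.sum_congr rfl hinner, Finset.sum_const, nsmul_eq_mul]

lemma real_telescope (a t : ℕ → ℝ) (ha : a 0 = 0) (N : ℕ) :
    ∑ l ∈ Finset.Icc 1 (N + 1), ((a l - a (l - 1) - t l) ^ 2 - t l ^ 2) / 2
      = (∑ l ∈ Finset.Icc 1 N, (a l ^ 2 - a l * a (l + 1) + a l * (t (l + 1) - t l)))
        + a (N + 1) ^ 2 / 2 - a (N + 1) * t (N + 1) := by
  induction N with
  | zero =>
    rw [show Finset.Icc 1 (0 + 1) = {1} by decide, show Finset.Icc 1 0 = ∅ by decide]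
    simp [ha]
    ring
  | succ N ih =>
    rw [Finset.sum_Icc_succ_top (by omega : 1 ≤ N + 1 + 1), ih,
      Finset.sum_Icc_succ_top (by omega : 1 ≤ N + 1)]
    simp only [Nat.add_sub_cancel]
    ring

lemma force_sum_eq (n : ℕ → ℕ) (c θ0 : ℕ → ℝ) (q : ℕ → ℕ → ℂ) (l : ℕ) :
    ∑ k ∈ Finset.Icc 1 (n l), force n c θ0 q l k
      = 2 * (c l : ℂ) ^ 2 * dsum1 n q l
        - (c l : ℂ) * (c (l + 1) : ℂ) * dsum2 n q l
        - (c l : ℂ) * (c (l - 1) : ℂ) * dsum3 n q l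
        + (n l : ℂ) * ((c l : ℂ) ^ 2 + (c l : ℂ) * ((θ0 (l + 1) : ℂ) - (θ0 l : ℂ))) := by
  have e1 : 2 * (c l : ℂ) ^ 2 * dsum1 n q l
      = ∑ k ∈ Finset.Icc 1 (n l), ∑ j ∈ (Finset.Icc 1 (n l)).erase k,
          2 * (c l : ℂ) ^ 2 * q l k / (q l k - q l j) := by
    simp only [dsum1, Finset.mul_sum]
    exact Finset.sum_congr rfl fun k _ => Finset.sum_congr rfl fun j _ => by ring
  have e2 : (c l : ℂ) * (c (l + 1) : ℂ) * dsum2 n q l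
      = ∑ k ∈ Finset.Icc 1 (n l), ∑ j ∈ Finset.Icc 1 (n (l + 1)),
          (c l : ℂ) * (c (l + 1) : ℂ) * q l k / (q l k - q (l + 1) j) := by
    simp only [dsum2, Finset.mul_sum]
    exact Finset.sum_congr rfl fun k _ => Finset.sum_congr rfl fun j _ => by ring
  have e3 : (c l : ℂ) * (c (l - 1) : ℂ) * dsum3 n q l
      = ∑ k ∈ Finset.Icc 1 (n l), ∑ j ∈ Finset.Icc 1 (n (l - 1)),
          (c l : ℂ) * (c (l - 1) : ℂ) * q l k / (q l k - q (l - 1) j) := by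
    simp only [dsum3, Finset.mul_sum]
    exact Finset.sum_congr rfl fun k _ => Finset.sum_congr rfl fun j _ => by ring
  simp only [force]
  rw [Finset.sum_add_distrib, Finset.sum_add_distrib, Finset.sum_sub_distrib,
    Finset.sum_sub_distrib, Finset.sum_const, Finset.sum_const, Nat.card_Icc,
    Nat.add_sub_cancel, ← e1, ← e2, ← e3]
  simp only [nsmul_eq_mul]
  ring

theorem stmt_1 (L : ℕ) (hL : 1 ≤ L) (n : ℕ → ℕ) (hn0 : n 0 = 0) (hnL : n (L + 1) = 0)
    (hn : ∀ l, 1 ≤ l → l ≤ L → 0 < n l)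
    (c : ℕ → ℝ) (hc0 : c 0 = 0) (hcL : c (L + 1) = 0)
    (θ0 θinf : ℕ → ℝ) (q : ℕ → ℕ → ℂ)
    (hq : ∀ l ∈ Finset.Icc 1 L, ∀ k ∈ Finset.Icc 1 (n l), ∀ l' ∈ Finset.Icc 1 L,
      ∀ k' ∈ Finset.Icc 1 (n l'), (l ≠ l' ∨ k ≠ k') →
        (l' = l ∨ l' = l + 1 ∨ l' + 1 = l) → q l k ≠ q l' k')
    (hres : ∀ l, 1 ≤ l → l ≤ L + 1 →
      -(n l : ℝ) * c l + (n (l - 1) : ℝ) * c (l - 1) + θ0 l + θinf l = 0) :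
    ∑ l ∈ Finset.Icc 1 L, ∑ k ∈ Finset.Icc 1 (n l), force n c θ0 q l k
      = ((∑ l ∈ Finset.Icc 1 (L + 1), ((θinf l) ^ 2 - (θ0 l) ^ 2) / 2 : ℝ) : ℂ) := by
  classical
  -- cross-layer pairing
  have hpair : ∀ M, M < L →
      ((c M : ℂ) * (c (M + 1) : ℂ)) * (dsum2 n q M + dsum3 n q (M + 1))
        = ((c M : ℂ) * (c (M + 1) : ℂ)) * ((n M : ℂ) * (n (M + 1) : ℂ)) := by
    intro M hM
    rcases Nat.eq_zero_or_pos M with rfl | hM1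
    · simp [hc0]
    · congr 1
      have h1 : M ∈ Finset.Icc 1 L := by simp only [Finset.mem_Icc]; omega
      have h2 : M + 1 ∈ Finset.Icc 1 L := by simp only [Finset.mem_Icc]; omega
      have hcp := cross_pair (Finset.Icc 1 (n M)) (Finset.Icc 1 (n (M + 1))) (q M) (q (M + 1))
        (fun k hk j hj => hq M h1 k hk (M + 1) h2 j hj (Or.inl (by omega))
          (Or.inr (Or.inl rfl)))
      simp only [Nat.card_Icc, Nat.add_sub_cancel] at hcp
      simpa only [dsum2, dsum3, Nat.add_sub_cancel] using hcp
  -- telescoping of cross terms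
  have key : ∀ M, M ≤ L →
      (∑ l ∈ Finset.Icc 1 M, (((c l : ℂ) * (c (l + 1) : ℂ)) * dsum2 n q l
          + ((c l : ℂ) * (c (l - 1) : ℂ)) * dsum3 n q l))
        + ((c M : ℂ) * (c (M + 1) : ℂ)) * ((n M : ℂ) * (n (M + 1) : ℂ))
      = (∑ l ∈ Finset.Icc 1 M, ((c l : ℂ) * (c (l + 1) : ℂ)) * ((n l : ℂ) * (n (l + 1) : ℂ)))
        + ((c M : ℂ) * (c (M + 1) : ℂ)) * dsum2 n q M := by
    intro M
    induction M with
    | zero =>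
      intro _
      rw [show Finset.Icc 1 0 = (∅ : Finset ℕ) by decide]
      simp [hc0]
    | succ M ih =>
      intro hML
      have h1 := ih (by omega)
      have h2 := hpair M (by omega)
      rw [Finset.sum_Icc_succ_top (by omega : 1 ≤ M + 1),
        Finset.sum_Icc_succ_top (by omega : 1 ≤ M + 1)]
      simp only [Nat.add_sub_cancel]
      linear_combination h1 + h2
  have hTT : (∑ l ∈ Finset.Icc 1 L, (((c l : ℂ) * (c (l + 1) : ℂ)) * dsum2 n q l
        + ((c l : ℂ) * (c (l - 1) : ℂ)) * dsum3 n q l))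
      = ∑ l ∈ Finset.Icc 1 L,
          ((c l : ℂ) * (c (l + 1) : ℂ)) * ((n l : ℂ) * (n (l + 1) : ℂ)) := by
    have h1 := key L le_rfl
    rw [hcL] at h1
    simpa using h1
  -- same-layer sums
  have hD1val : ∀ l ∈ Finset.Icc 1 L, 2 * (c l : ℂ) ^ 2 * dsum1 n q l
      = (c l : ℂ) ^ 2 * ((n l : ℂ) * ((n l : ℂ) - 1)) := by
    intro l hl
    have hsp := self_pair (Finset.Icc 1 (n l)) (q l)
      (fun k hk j hj hkj => hq l hl k hk l hl j hj (Or.inr hkj) (Or.inl rfl))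
    simp only [Nat.card_Icc, Nat.add_sub_cancel] at hsp
    simp only [dsum1]
    linear_combination ((c l : ℂ) ^ 2) * hsp
  -- assemble complex side
  have hsum : ∑ l ∈ Finset.Icc 1 L, ∑ k ∈ Finset.Icc 1 (n l), force n c θ0 q l k
      = ∑ l ∈ Finset.Icc 1 L,
          (((n l : ℂ) * (c l : ℂ)) ^ 2
            - ((n l : ℂ) * (c l : ℂ)) * ((n (l + 1) : ℂ) * (c (l + 1) : ℂ))
            + ((n l : ℂ) * (c l : ℂ)) * ((θ0 (l + 1) : ℂ) - (θ0 l : ℂ))) := by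
    rw [Finset.sum_congr rfl (fun l _ => force_sum_eq n c θ0 q l)]
    have split : ∑ l ∈ Finset.Icc 1 L,
        (2 * (c l : ℂ) ^ 2 * dsum1 n q l
          - (c l : ℂ) * (c (l + 1) : ℂ) * dsum2 n q l
          - (c l : ℂ) * (c (l - 1) : ℂ) * dsum3 n q l
          + (n l : ℂ) * ((c l : ℂ) ^ 2 + (c l : ℂ) * ((θ0 (l + 1) : ℂ) - (θ0 l : ℂ))))
        = (∑ l ∈ Finset.Icc 1 L,
            (2 * (c l : ℂ) ^ 2 * dsum1 n q l
              + (n l : ℂ) * ((c l : ℂ) ^ 2 + (c l : ℂ) * ((θ0 (l + 1) : ℂ) - (θ0 l : ℂ)))))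
          - ∑ l ∈ Finset.Icc 1 L, (((c l : ℂ) * (c (l + 1) : ℂ)) * dsum2 n q l
              + ((c l : ℂ) * (c (l - 1) : ℂ)) * dsum3 n q l) := by
      rw [← Finset.sum_sub_distrib]
      exact Finset.sum_congr rfl fun l _ => by ring
    rw [split, hTT, ← Finset.sum_sub_distrib]
    refine Finset.sum_congr rfl fun l hl => ?_
    linear_combination hD1val l hl
  -- real side
  have hres' : ∀ l ∈ Finset.Icc 1 (L + 1),
      θinf l = (n l : ℝ) * c l - (n (l - 1) : ℝ) * c (l - 1) - θ0 l := by
    intro l hl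
    rw [Finset.mem_Icc] at hl
    have := hres l hl.1 hl.2
    linarith
  have hrealsum : ∑ l ∈ Finset.Icc 1 (L + 1), ((θinf l) ^ 2 - (θ0 l) ^ 2) / 2
      = ∑ l ∈ Finset.Icc 1 L,
          (((n l : ℝ) * c l) ^ 2 - ((n l : ℝ) * c l) * ((n (l + 1) : ℝ) * c (l + 1))
            + ((n l : ℝ) * c l) * (θ0 (l + 1) - θ0 l)) := by
    rw [Finset.sum_congr rfl (fun l hl => by rw [hres' l hl])]
    have ht := real_telescope (fun l => (n l : ℝ) * c l) θ0 (by simp [hc0]) L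
    rw [hcL] at ht
    simpa using ht
  have hcast : ((∑ l ∈ Finset.Icc 1 (L + 1), ((θinf l) ^ 2 - (θ0 l) ^ 2) / 2 : ℝ) : ℂ)
      = ∑ l ∈ Finset.Icc 1 L,
          (((n l : ℂ) * (c l : ℂ)) ^ 2
            - ((n l : ℂ) * (c l : ℂ)) * ((n (l + 1) : ℂ) * (c (l + 1) : ℂ))
            + ((n l : ℂ) * (c l : ℂ)) * ((θ0 (l + 1) : ℂ) - (θ0 l : ℂ))) := by
    rw [hrealsum]
    push_cast
    exact Finset.sum_congr rfl fun l _ => by ring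
  rw [hsum, hcast]
end

section
/- Assume Θ_1 = 0, Θ_2 = 0, and the embeddedness conditions θ̇_{1,0} > θ̇_{2,0} > ⋯ > θ̇_{L+1,0} and θ̇_{1,∞} > θ̇_{2,∞} > ⋯ > θ̇_{L+1,∞}. Then: (i) c_l > 0 for all 1 ≤ l ≤ L; (ii) Σ_{i=1}^{L} c_i (θ̇_{i+1,0} + θ̇_{i,∞}) = 0; and (iii) 0 < Q̃_l < c_l c_{l+1} for all 1 ≤ l ≤ L−1. -/
private lemma anti_aux (N : ℕ) (g : ℕ → ℝ)
    (hg : ∀ i, 1 ≤ i → i + 1 ≤ N → g (i + 1) < g i) :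
    ∀ i j, 1 ≤ i → i ≤ j → j ≤ N → g j ≤ g i := by
  intro i j h1 hij
  induction j, hij using Nat.le_induction with
  | base => intro _; exact le_refl _
  | succ k hk ih =>
    intro hkN
    have h1' := hg k (by omega) hkN
    have h2' := ih (by omega)
    linarith

private lemma partial_pos (N : ℕ) (w g : ℕ → ℝ)
    (hw : ∀ i, 1 ≤ i → i ≤ N → 0 < w i)
    (hg : ∀ i, 1 ≤ i → i + 1 ≤ N → g (i + 1) < g i)
    (hsum : ∑ i ∈ Finset.Icc 1 N, w i * g i = 0)
    (l : ℕ) (hl : 1 ≤ l) (hlN : l + 1 ≤ N) :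
    0 < ∑ i ∈ Finset.Icc 1 l, w i * g i := by
  have hanti := anti_aux N g hg
  by_cases hp : 0 ≤ g (l + 1)
  · apply Finset.sum_pos
    · intro i hi
      simp only [Finset.mem_Icc] at hi
      have h1 : g (l + 1) < g l := hg l hl hlN
      have h2 : g l ≤ g i := hanti i l hi.1 hi.2 (by omega)
      exact mul_pos (hw i hi.1 (by omega)) (by linarith)
    · exact ⟨1, by simp [Finset.mem_Icc]; omega⟩
  · push_neg at hp
    have hsplit : (∑ i ∈ Finset.Icc 1 l, w i * g i)
        + ∑ i ∈ Finset.Icc (l + 1) N, w i * g i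
        = ∑ i ∈ Finset.Icc 1 N, w i * g i := by
      rw [← Finset.Ico_add_one_right_eq_Icc 1 l, ← Finset.Ico_add_one_right_eq_Icc (l + 1) N,
        ← Finset.Ico_add_one_right_eq_Icc 1 N]
      exact Finset.sum_Ico_consecutive _ (by omega) (by omega)
    have htail : ∑ i ∈ Finset.Icc (l + 1) N, w i * g i < 0 := by
      apply Finset.sum_neg
      · intro i hi
        simp only [Finset.mem_Icc] at hi
        have h2 : g i ≤ g (l + 1) := hanti (l + 1) i (by omega) hi.1 hi.2
        exact mul_neg_of_pos_of_neg (hw i (by omega) hi.2) (by linarith)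
      · exact ⟨l + 1, by simp [Finset.mem_Icc]; omega⟩
    linarith [hsum, hsplit]

private lemma ident_aux (a b : ℕ → ℝ) (L : ℕ) :
    ∑ i ∈ Finset.Icc 1 L, (∑ j ∈ Finset.Icc 1 i, (a j + b j)) * (a (i + 1) + b i)
      = (∑ j ∈ Finset.Icc 1 (L + 1), (a j + b j)) ^ 2 / 2
        - (∑ j ∈ Finset.Icc 1 (L + 1), (a j + b j)) * b (L + 1)
        + ∑ j ∈ Finset.Icc 1 (L + 1), (b j ^ 2 - a j ^ 2) / 2 := by
  induction L with
  | zero => simp; ring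
  | succ n ih =>
    rw [Finset.sum_Icc_succ_top (by omega : 1 ≤ n + 1),
      Finset.sum_Icc_succ_top (by omega : 1 ≤ n + 1 + 1)
        (fun j => a j + b j),
      Finset.sum_Icc_succ_top (by omega : 1 ≤ n + 1 + 1)
        (fun j => (b j ^ 2 - a j ^ 2) / 2)]
    linear_combination ih

theorem stmt_2 (L : ℕ) (hL : 2 ≤ L) (θ0 θinf : ℕ → ℝ)
    (c Qt : ℕ → ℝ)
    (hc : ∀ l, c l = ∑ i ∈ Finset.Icc 1 l, (θ0 i + θinf i))
    (hQ : ∀ l, Qt l = ∑ i ∈ Finset.Icc 1 l, c i * (θ0 (i + 1) + θinf i))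
    (hΘ1 : ∑ l ∈ Finset.Icc 1 (L + 1), (θ0 l + θinf l) = 0)
    (hΘ2 : ∑ l ∈ Finset.Icc 1 (L + 1), ((θinf l) ^ 2 - (θ0 l) ^ 2) / 2 = 0)
    (hemb0 : ∀ l, 1 ≤ l → l ≤ L → θ0 (l + 1) < θ0 l)
    (hembinf : ∀ l, 1 ≤ l → l ≤ L → θinf (l + 1) < θinf l) :
    (∀ l, 1 ≤ l → l ≤ L → 0 < c l)
      ∧ (∑ i ∈ Finset.Icc 1 L, c i * (θ0 (i + 1) + θinf i) = 0)
      ∧ (∀ l, 1 ≤ l → l ≤ L - 1 → 0 < Qt l ∧ Qt l < c l * c (l + 1)) := by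
  -- Part (i)
  have part1 : ∀ l, 1 ≤ l → l ≤ L → 0 < c l := by
    intro l hl hlL
    have := partial_pos (L + 1) (fun _ => 1) (fun i => θ0 i + θinf i)
      (fun _ _ _ => one_pos)
      (fun i hi hiN => by
        have := hemb0 i hi (by omega)
        have := hembinf i hi (by omega)
        show θ0 (i + 1) + θinf (i + 1) < θ0 i + θinf i
        linarith)
      (by simpa using hΘ1) l hl (by omega)
    rw [hc l]
    simpa using this
  -- Part (ii)
  have part2 : ∑ i ∈ Finset.Icc 1 L, c i * (θ0 (i + 1) + θinf i) = 0 := by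
    have hrw : ∑ i ∈ Finset.Icc 1 L, c i * (θ0 (i + 1) + θinf i)
        = ∑ i ∈ Finset.Icc 1 L,
            (∑ j ∈ Finset.Icc 1 i, (θ0 j + θinf j)) * (θ0 (i + 1) + θinf i) :=
      Finset.sum_congr rfl (fun i _ => by rw [hc])
    rw [hrw, ident_aux θ0 θinf L, hΘ1, hΘ2]
    ring
  refine ⟨part1, part2, ?_⟩
  -- Part (iii)
  have hcL1 : c (L + 1) = 0 := by rw [hc]; exact hΘ1
  have ident2 : ∀ l, ∑ i ∈ Finset.Icc 1 l, c i * (θ0 i + θinf (i + 1))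
      = c l * c (l + 1) - ∑ i ∈ Finset.Icc 1 l, c i * (θ0 (i + 1) + θinf i) := by
    intro l
    induction l with
    | zero => simp [hc 0]
    | succ n ih =>
      rw [Finset.sum_Icc_succ_top (by omega : 1 ≤ n + 1),
        Finset.sum_Icc_succ_top (by omega : 1 ≤ n + 1)
          (fun i => c i * (θ0 (i + 1) + θinf i))]
      have h1 : c (n + 1) = c n + (θ0 (n + 1) + θinf (n + 1)) := by
        rw [hc (n + 1), hc n, Finset.sum_Icc_succ_top (by omega : 1 ≤ n + 1)]
      have h2 : c (n + 2) = c (n + 1) + (θ0 (n + 2) + θinf (n + 2)) := by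
        rw [hc (n + 2), hc (n + 1), Finset.sum_Icc_succ_top (by omega : 1 ≤ n + 2)]
      linear_combination ih - c (n + 1) * h1 - c (n + 1) * h2
  have hsum2 : ∑ i ∈ Finset.Icc 1 L, c i * (θ0 i + θinf (i + 1)) = 0 := by
    rw [ident2 L, part2, hcL1]; ring
  intro l hl hlL
  have hl1 : l + 1 ≤ L := by omega
  constructor
  · rw [hQ l]
    exact partial_pos L c (fun i => θ0 (i + 1) + θinf i)
      part1
      (fun i hi hiN => by
        have := hemb0 (i + 1) (by omega) (by omega)
        have := hembinf i hi (by omega)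
        show θ0 (i + 1 + 1) + θinf (i + 1) < θ0 (i + 1) + θinf i
        linarith)
      part2 l hl hl1
  · have hpos := partial_pos L c (fun i => θ0 i + θinf (i + 1))
      part1
      (fun i hi hiN => by
        have := hemb0 i hi (by omega)
        have := hembinf (i + 1) (by omega) (by omega)
        show θ0 (i + 1) + θinf (i + 1 + 1) < θ0 i + θinf (i + 1)
        linarith)
      hsum2 l hl hl1
    rw [ident2 l] at hpos
    rw [hQ l]
    linarith
end

section
/- Assume Θ_1 = 0, Θ_2 = 0, and the embeddedness conditions θ̇_{1,0} > θ̇_{2,0} > ⋯ > θ̇_{L+1,0} and θ̇_{1,∞} > θ̇_{2,∞} > ⋯ > θ̇_{L+1,∞}. Then there exist unique complex numbers q_1, …, q_L with q_1 = 1, q_l ≠ 0 for all l, and q_l ≠ q_{l+1} for 1 ≤ l ≤ L−1, such that F_l = 0 for all 1 ≤ l ≤ L. Moreover, each q_l is a real number and (−1)^{l+1} q_l > 0, i.e., q_l > 0 for odd l and q_l < 0 for even l. -/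
/-- `c_l = Σ_{i=1}^{l} (θ̇_{i,0} + θ̇_{i,∞})`.  Note `cseq θ0 θinf 0 = 0`, and when
`Θ₁ = 0` also `cseq θ0 θinf (L+1) = 0`, matching the conventions `c_0 = c_{L+1} = 0`. -/
noncomputable def cseq (θ0 θinf : ℕ → ℝ) (l : ℕ) : ℝ :=
  ∑ i ∈ Finset.Icc 1 l, (θ0 i + θinf i)

/-- The genus-0 force on layer `l` (one neck `q l` per layer):
`F_l = -c_l c_{l+1} q_l/(q_l - q_{l+1}) - c_l c_{l-1} q_l/(q_l - q_{l-1})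
      + c_l² + c_l (θ̇_{l+1,0} - θ̇_{l,0})`.
The terms involving `c_0 = 0` (for `l = 1`) and `c_{L+1} = 0` (for `l = L`, when
`Θ₁ = 0`) vanish, so the out-of-range values of `q` are irrelevant. -/
noncomputable def forceG0 (θ0 θinf : ℕ → ℝ) (q : ℕ → ℂ) (l : ℕ) : ℂ :=
  -((cseq θ0 θinf l : ℂ) * (cseq θ0 θinf (l + 1) : ℂ) * q l / (q l - q (l + 1)))
    - ((cseq θ0 θinf l : ℂ) * (cseq θ0 θinf (l - 1) : ℂ) * q l / (q l - q (l - 1)))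
    + (cseq θ0 θinf l : ℂ) ^ 2
    + (cseq θ0 θinf l : ℂ) * ((θ0 (l + 1) : ℂ) - (θ0 l : ℂ))

/-- A genus-0 configuration normalized by `q 1 = 1`, with nonzero necks, adjacent
necks distinct, and all forces vanishing. -/
def IsBalancedG0 (L : ℕ) (θ0 θinf : ℕ → ℝ) (q : ℕ → ℂ) : Prop :=
  q 1 = 1 ∧ (∀ l, 1 ≤ l → l ≤ L → q l ≠ 0)
    ∧ (∀ l, 1 ≤ l → l ≤ L - 1 → q l ≠ q (l + 1))
    ∧ (∀ l, 1 ≤ l → l ≤ L → forceG0 θ0 θinf q l = 0)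


/-- If positive weights `p` and a strictly decreasing sequence `w` (on `[1,N]`) have
total weighted sum zero, then all proper partial weighted sums are positive. -/
lemma stmt3_partial_pos (N : ℕ) (p w : ℕ → ℝ)
    (hp : ∀ i, 1 ≤ i → i ≤ N → 0 < p i)
    (hw : ∀ i, 1 ≤ i → i + 1 ≤ N → w (i + 1) < w i)
    (htot : ∑ i ∈ Finset.Icc 1 N, p i * w i = 0) :
    ∀ l, 1 ≤ l → l < N → 0 < ∑ i ∈ Finset.Icc 1 l, p i * w i := by
  have hmono : ∀ i j, 1 ≤ i → i < j → j ≤ N → w j < w i := by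
    intro i j hi hij hjN
    induction j with
    | zero => omega
    | succ k ih =>
      rcases Nat.lt_or_ge i k with h | h
      · exact lt_trans (hw k (by omega) (by omega)) (ih h (by omega))
      · have : i = k := by omega
        subst this
        exact hw i hi hjN
  intro l hl hlN
  by_contra hcon
  push_neg at hcon
  have hex : ∃ i ∈ Finset.Icc 1 l, w i ≤ 0 := by
    by_contra hc
    push_neg at hc
    have : 0 < ∑ i ∈ Finset.Icc 1 l, p i * w i := by
      apply Finset.sum_pos
      · intro i hi
        rw [Finset.mem_Icc] at hi
        exact mul_pos (hp i hi.1 (by omega)) (hc i (Finset.mem_Icc.mpr hi))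
      · exact Finset.nonempty_Icc.mpr hl
    linarith
  obtain ⟨i, hi, hwi⟩ := hex
  rw [Finset.mem_Icc] at hi
  have hsplit : (∑ j ∈ Finset.Icc 1 l, p j * w j) + ∑ j ∈ Finset.Ioc l N, p j * w j
      = ∑ j ∈ Finset.Icc 1 N, p j * w j := by
    rw [show (1 : ℕ) = 0 + 1 from rfl, Finset.Icc_add_one_left_eq_Ioc, Finset.Icc_add_one_left_eq_Ioc]
    exact Finset.sum_Ioc_consecutive _ (Nat.zero_le l) (le_of_lt hlN)
  have hneg : ∑ j ∈ Finset.Ioc l N, p j * w j < 0 := by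
    apply Finset.sum_neg
    · intro j hj
      rw [Finset.mem_Ioc] at hj
      have : w j < w i := hmono i j hi.1 (by omega) hj.2
      exact mul_neg_of_pos_of_neg (hp j (by omega) hj.2) (by linarith)
    · exact Finset.nonempty_Ioc.mpr hlN
  linarith


noncomputable def stmt3_d (θ0 θinf : ℕ → ℝ) (l : ℕ) : ℝ :=
  ∑ i ∈ Finset.Icc 1 l, cseq θ0 θinf i * (θinf i + θ0 (i + 1))

lemma cseq_zero (θ0 θinf : ℕ → ℝ) : cseq θ0 θinf 0 = 0 := by simp [cseq]

lemma cseq_succ (θ0 θinf : ℕ → ℝ) (l : ℕ) :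
    cseq θ0 θinf (l + 1) = cseq θ0 θinf l + (θ0 (l + 1) + θinf (l + 1)) :=
  Finset.sum_Icc_succ_top (by omega) _

lemma stmt3_d_zero (θ0 θinf : ℕ → ℝ) : stmt3_d θ0 θinf 0 = 0 := by simp [stmt3_d]

lemma stmt3_d_succ (θ0 θinf : ℕ → ℝ) (l : ℕ) :
    stmt3_d θ0 θinf (l + 1) = stmt3_d θ0 θinf l
      + cseq θ0 θinf (l + 1) * (θinf (l + 1) + θ0 (l + 2)) :=
  Finset.sum_Icc_succ_top (by omega) _

/-- Abel summation formula for `d`. -/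
lemma stmt3_d_abel (θ0 θinf : ℕ → ℝ) (n : ℕ) :
    stmt3_d θ0 θinf n = cseq θ0 θinf n ^ 2 / 2 + cseq θ0 θinf n * θ0 (n + 1)
      + (∑ i ∈ Finset.Icc 1 n, (θinf i ^ 2 - θ0 i ^ 2)) / 2 := by
  induction n with
  | zero => simp [stmt3_d, cseq]
  | succ k ih =>
    rw [stmt3_d_succ, ih, cseq_succ, Finset.sum_Icc_succ_top (by omega : 1 ≤ k + 1)]
    ring

/-- Abel-type formula for `e_l = c_l c_{l+1} - d_l`. -/
lemma stmt3_e_abel (θ0 θinf : ℕ → ℝ) (n : ℕ) :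
    cseq θ0 θinf n * cseq θ0 θinf (n + 1) - stmt3_d θ0 θinf n
      = ∑ i ∈ Finset.Icc 1 n, cseq θ0 θinf i * (θ0 i + θinf (i + 1)) := by
  induction n with
  | zero => simp [stmt3_d, cseq]
  | succ k ih =>
    rw [stmt3_d_succ, Finset.sum_Icc_succ_top (by omega : 1 ≤ k + 1), ← ih,
      cseq_succ θ0 θinf (k + 1), cseq_succ θ0 θinf k]
    ring

section Hyps

variable (L : ℕ) (θ0 θinf : ℕ → ℝ)

lemma stmt3_cL1 (hΘ1 : ∑ l ∈ Finset.Icc 1 (L + 1), (θ0 l + θinf l) = 0) :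
    cseq θ0 θinf (L + 1) = 0 := hΘ1

lemma stmt3_dL (hL : 1 ≤ L)
    (hΘ1 : ∑ l ∈ Finset.Icc 1 (L + 1), (θ0 l + θinf l) = 0)
    (hΘ2 : ∑ l ∈ Finset.Icc 1 (L + 1), ((θinf l) ^ 2 - (θ0 l) ^ 2) / 2 = 0) :
    stmt3_d θ0 θinf L = 0 := by
  have hc : cseq θ0 θinf L + (θ0 (L + 1) + θinf (L + 1)) = 0 := by
    rw [← cseq_succ]; exact hΘ1
  have h2 : (∑ i ∈ Finset.Icc 1 L, (θinf i ^ 2 - θ0 i ^ 2))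
      + (θinf (L + 1) ^ 2 - θ0 (L + 1) ^ 2) = 0 := by
    rw [← Finset.sum_Icc_succ_top (by omega : 1 ≤ L + 1)]
    have h2' := hΘ2
    rw [← Finset.sum_div, div_eq_zero_iff] at h2'
    rcases h2' with h2' | h2'
    · exact h2'
    · norm_num at h2'
  rw [stmt3_d_abel]
  have hcL : cseq θ0 θinf L = -(θ0 (L + 1) + θinf (L + 1)) := by linarith
  rw [hcL]
  have hs : (∑ i ∈ Finset.Icc 1 L, (θinf i ^ 2 - θ0 i ^ 2))
      = -(θinf (L + 1) ^ 2 - θ0 (L + 1) ^ 2) := by linarith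
  rw [hs]; ring

lemma stmt3_c_pos (hL : 1 ≤ L)
    (hΘ1 : ∑ l ∈ Finset.Icc 1 (L + 1), (θ0 l + θinf l) = 0)
    (hemb0 : ∀ l, 1 ≤ l → l ≤ L → θ0 (l + 1) < θ0 l)
    (hembinf : ∀ l, 1 ≤ l → l ≤ L → θinf (l + 1) < θinf l) :
    ∀ l, 1 ≤ l → l ≤ L → 0 < cseq θ0 θinf l := by
  intro l hl hlL
  have := stmt3_partial_pos (L + 1) (fun _ => 1) (fun i => θ0 i + θinf i)
    (fun i _ _ => one_pos)
    (fun i hi hiN => by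
      have h1 := hemb0 i hi (by omega); have h2 := hembinf i hi (by omega); linarith)
    (by simpa using hΘ1) l hl (by omega)
  simpa [cseq] using this

lemma stmt3_d_pos (hL : 1 ≤ L)
    (hΘ1 : ∑ l ∈ Finset.Icc 1 (L + 1), (θ0 l + θinf l) = 0)
    (hΘ2 : ∑ l ∈ Finset.Icc 1 (L + 1), ((θinf l) ^ 2 - (θ0 l) ^ 2) / 2 = 0)
    (hemb0 : ∀ l, 1 ≤ l → l ≤ L → θ0 (l + 1) < θ0 l)
    (hembinf : ∀ l, 1 ≤ l → l ≤ L → θinf (l + 1) < θinf l) :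
    ∀ l, 1 ≤ l → l < L → 0 < stmt3_d θ0 θinf l := by
  intro l hl hlL
  exact stmt3_partial_pos L (cseq θ0 θinf) (fun i => θinf i + θ0 (i + 1))
    (fun i hi hiL => stmt3_c_pos L θ0 θinf hL hΘ1 hemb0 hembinf i hi hiL)
    (fun i hi hiN => by
      have h1 := hemb0 (i + 1) (by omega) (by omega)
      have h2 := hembinf i hi (by omega)
      linarith)
    (stmt3_dL L θ0 θinf hL hΘ1 hΘ2) l hl hlL

lemma stmt3_e_pos (hL : 1 ≤ L)
    (hΘ1 : ∑ l ∈ Finset.Icc 1 (L + 1), (θ0 l + θinf l) = 0)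
    (hΘ2 : ∑ l ∈ Finset.Icc 1 (L + 1), ((θinf l) ^ 2 - (θ0 l) ^ 2) / 2 = 0)
    (hemb0 : ∀ l, 1 ≤ l → l ≤ L → θ0 (l + 1) < θ0 l)
    (hembinf : ∀ l, 1 ≤ l → l ≤ L → θinf (l + 1) < θinf l) :
    ∀ l, 1 ≤ l → l < L →
      0 < cseq θ0 θinf l * cseq θ0 θinf (l + 1) - stmt3_d θ0 θinf l := by
  intro l hl hlL
  rw [stmt3_e_abel]
  exact stmt3_partial_pos L (cseq θ0 θinf) (fun i => θ0 i + θinf (i + 1))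
    (fun i hi hiL => stmt3_c_pos L θ0 θinf hL hΘ1 hemb0 hembinf i hi hiL)
    (fun i hi hiN => by
      have h1 := hemb0 i hi (by omega)
      have h2 := hembinf (i + 1) (by omega) (by omega)
      linarith)
    (by
      rw [← stmt3_e_abel, stmt3_cL1 L θ0 θinf hΘ1, stmt3_dL L θ0 θinf hL hΘ1 hΘ2]
      ring) l hl hlL

end Hyps

noncomputable def stmt3_qa (g : ℕ → ℝ) : ℕ → ℝ
  | 0 => 0
  | 1 => 1
  | (n + 2) => stmt3_qa g (n + 1) * g (n + 1)

lemma stmt3_qa_one (g : ℕ → ℝ) : stmt3_qa g 1 = 1 := rfl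

lemma stmt3_qa_succ (g : ℕ → ℝ) (n : ℕ) (hn : 1 ≤ n) :
    stmt3_qa g (n + 1) = stmt3_qa g n * g n := by
  obtain ⟨m, rfl⟩ : ∃ m, n = m + 1 := ⟨n - 1, by omega⟩
  rfl

noncomputable def stmt3_r (θ0 θinf : ℕ → ℝ) (l : ℕ) : ℝ :=
  stmt3_d θ0 θinf l / (cseq θ0 θinf l * cseq θ0 θinf (l + 1))

noncomputable def stmt3_g (θ0 θinf : ℕ → ℝ) (l : ℕ) : ℝ :=
  1 - 1 / stmt3_r θ0 θinf l

section Main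

variable (L : ℕ) (hL : 1 ≤ L) (θ0 θinf : ℕ → ℝ)
    (hΘ1 : ∑ l ∈ Finset.Icc 1 (L + 1), (θ0 l + θinf l) = 0)
    (hΘ2 : ∑ l ∈ Finset.Icc 1 (L + 1), ((θinf l) ^ 2 - (θ0 l) ^ 2) / 2 = 0)
    (hemb0 : ∀ l, 1 ≤ l → l ≤ L → θ0 (l + 1) < θ0 l)
    (hembinf : ∀ l, 1 ≤ l → l ≤ L → θinf (l + 1) < θinf l)

include hL hΘ1 hΘ2 hemb0 hembinf

lemma stmt3_r_mem : ∀ l, 1 ≤ l → l < L →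
    0 < stmt3_r θ0 θinf l ∧ stmt3_r θ0 θinf l < 1 := by
  intro l hl hlL
  have hcc : 0 < cseq θ0 θinf l * cseq θ0 θinf (l + 1) :=
    mul_pos (stmt3_c_pos L θ0 θinf hL hΘ1 hemb0 hembinf l hl (by omega))
      (stmt3_c_pos L θ0 θinf hL hΘ1 hemb0 hembinf (l + 1) (by omega) (by omega))
  constructor
  · exact div_pos (stmt3_d_pos L θ0 θinf hL hΘ1 hΘ2 hemb0 hembinf l hl hlL) hcc
  · rw [stmt3_r, div_lt_one hcc]
    have := stmt3_e_pos L θ0 θinf hL hΘ1 hΘ2 hemb0 hembinf l hl hlL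
    linarith

lemma stmt3_g_neg : ∀ l, 1 ≤ l → l < L → stmt3_g θ0 θinf l < 0 := by
  intro l hl hlL
  obtain ⟨h0, h1⟩ := stmt3_r_mem L hL θ0 θinf hΘ1 hΘ2 hemb0 hembinf l hl hlL
  have : 1 < 1 / stmt3_r θ0 θinf l := by rw [lt_div_iff₀ h0]; linarith
  simp only [stmt3_g]; linarith

lemma stmt3_sign : ∀ l, 1 ≤ l → l ≤ L →
    0 < (-1 : ℝ) ^ (l + 1) * stmt3_qa (stmt3_g θ0 θinf) l := by
  intro l hl
  induction l, hl using Nat.le_induction with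
  | base => intro _; simp [stmt3_qa_one]
  | succ n hn ih =>
    intro hnL
    have ihv := ih (by omega)
    have hg := stmt3_g_neg L hL θ0 θinf hΘ1 hΘ2 hemb0 hembinf n hn (by omega)
    rw [stmt3_qa_succ _ n hn]
    have : (-1 : ℝ) ^ (n + 1 + 1) * (stmt3_qa (stmt3_g θ0 θinf) n * stmt3_g θ0 θinf n)
        = ((-1 : ℝ) ^ (n + 1) * stmt3_qa (stmt3_g θ0 θinf) n) * (-(stmt3_g θ0 θinf n)) := by
      ring
    rw [this]
    exact mul_pos ihv (by linarith)

lemma stmt3_qa_ne : ∀ l, 1 ≤ l → l ≤ L → stmt3_qa (stmt3_g θ0 θinf) l ≠ 0 := by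
  intro l hl hlL h
  have := stmt3_sign L hL θ0 θinf hΘ1 hΘ2 hemb0 hembinf l hl hlL
  rw [h] at this; simp at this

lemma stmt3_ratio1 : ∀ l, 1 ≤ l → l < L →
    stmt3_qa (stmt3_g θ0 θinf) l
      / (stmt3_qa (stmt3_g θ0 θinf) l - stmt3_qa (stmt3_g θ0 θinf) (l + 1))
      = stmt3_r θ0 θinf l := by
  intro l hl hlL
  have hx := stmt3_qa_ne L hL θ0 θinf hΘ1 hΘ2 hemb0 hembinf l hl (le_of_lt hlL)
  have hr0 : stmt3_r θ0 θinf l ≠ 0 :=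
    ne_of_gt (stmt3_r_mem L hL θ0 θinf hΘ1 hΘ2 hemb0 hembinf l hl hlL).1
  rw [stmt3_qa_succ _ l hl, stmt3_g]
  field_simp
  ring

lemma stmt3_ratio2 : ∀ l, 1 ≤ l → l < L →
    stmt3_qa (stmt3_g θ0 θinf) (l + 1)
      / (stmt3_qa (stmt3_g θ0 θinf) (l + 1) - stmt3_qa (stmt3_g θ0 θinf) l)
      = 1 - stmt3_r θ0 θinf l := by
  intro l hl hlL
  have hx := stmt3_qa_ne L hL θ0 θinf hΘ1 hΘ2 hemb0 hembinf l hl (le_of_lt hlL)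
  have hr0 : stmt3_r θ0 θinf l ≠ 0 :=
    ne_of_gt (stmt3_r_mem L hL θ0 θinf hΘ1 hΘ2 hemb0 hembinf l hl hlL).1
  rw [stmt3_qa_succ _ l hl, stmt3_g]
  rw [div_eq_iff]
  · field_simp
    ring
  · have : stmt3_qa (stmt3_g θ0 θinf) l * (1 - 1 / stmt3_r θ0 θinf l)
        - stmt3_qa (stmt3_g θ0 θinf) l
        = -(stmt3_qa (stmt3_g θ0 θinf) l / stmt3_r θ0 θinf l) := by
      field_simp; ring
    rw [this]
    intro h
    rw [neg_eq_zero, div_eq_zero_iff] at h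
    tauto

lemma stmt3_term1 : ∀ l, 1 ≤ l → l ≤ L →
    cseq θ0 θinf l * cseq θ0 θinf (l + 1) * stmt3_qa (stmt3_g θ0 θinf) l
      / (stmt3_qa (stmt3_g θ0 θinf) l - stmt3_qa (stmt3_g θ0 θinf) (l + 1))
      = stmt3_d θ0 θinf l := by
  intro l hl hlL
  rcases Nat.lt_or_ge l L with hlt | hge
  · rw [mul_div_assoc, stmt3_ratio1 L hL θ0 θinf hΘ1 hΘ2 hemb0 hembinf l hl hlt, stmt3_r]
    have hcc : cseq θ0 θinf l * cseq θ0 θinf (l + 1) ≠ 0 :=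
      ne_of_gt (mul_pos (stmt3_c_pos L θ0 θinf hL hΘ1 hemb0 hembinf l hl (by omega))
        (stmt3_c_pos L θ0 θinf hL hΘ1 hemb0 hembinf (l + 1) (by omega) (by omega)))
    field_simp
    exact mul_div_cancel_left₀ _ hcc
  · have hlL' : l = L := by omega
    rw [hlL', stmt3_cL1 L θ0 θinf hΘ1, stmt3_dL L θ0 θinf hL hΘ1 hΘ2]
    simp

lemma stmt3_term2 : ∀ l, 1 ≤ l → l ≤ L →
    cseq θ0 θinf l * cseq θ0 θinf (l - 1) * stmt3_qa (stmt3_g θ0 θinf) l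
      / (stmt3_qa (stmt3_g θ0 θinf) l - stmt3_qa (stmt3_g θ0 θinf) (l - 1))
      = cseq θ0 θinf (l - 1) * cseq θ0 θinf l - stmt3_d θ0 θinf (l - 1) := by
  intro l hl hlL
  obtain ⟨m, rfl⟩ : ∃ m, l = m + 1 := ⟨l - 1, by omega⟩
  simp only [Nat.add_sub_cancel]
  rcases Nat.eq_zero_or_pos m with hm | hm
  · subst hm
    rw [cseq_zero, stmt3_d_zero]
    simp
  · have hmL : m < L := by omega
    rw [mul_div_assoc, stmt3_ratio2 L hL θ0 θinf hΘ1 hΘ2 hemb0 hembinf m hm hmL]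
    have hcc : cseq θ0 θinf m * cseq θ0 θinf (m + 1) ≠ 0 :=
      ne_of_gt (mul_pos (stmt3_c_pos L θ0 θinf hL hΘ1 hemb0 hembinf m hm (by omega))
        (stmt3_c_pos L θ0 θinf hL hΘ1 hemb0 hembinf (m + 1) (by omega) (by omega)))
    rw [stmt3_r]
    have hc1 := left_ne_zero_of_mul hcc
    have hc2 := right_ne_zero_of_mul hcc
    field_simp

lemma stmt3_force : ∀ l, 1 ≤ l → l ≤ L →
    forceG0 θ0 θinf (fun n => ((stmt3_qa (stmt3_g θ0 θinf) n : ℝ) : ℂ)) l = 0 := by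
  intro l hl hlL
  obtain ⟨m, rfl⟩ : ∃ m, l = m + 1 := ⟨l - 1, by omega⟩
  have t1 := stmt3_term1 L hL θ0 θinf hΘ1 hΘ2 hemb0 hembinf (m + 1) hl hlL
  have t2 := stmt3_term2 L hL θ0 θinf hΘ1 hΘ2 hemb0 hembinf (m + 1) hl hlL
  simp only [Nat.add_sub_cancel] at t2
  have hre : -(cseq θ0 θinf (m + 1) * cseq θ0 θinf (m + 1 + 1) * stmt3_qa (stmt3_g θ0 θinf) (m + 1)
        / (stmt3_qa (stmt3_g θ0 θinf) (m + 1) - stmt3_qa (stmt3_g θ0 θinf) (m + 1 + 1)))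
      - (cseq θ0 θinf (m + 1) * cseq θ0 θinf m * stmt3_qa (stmt3_g θ0 θinf) (m + 1)
        / (stmt3_qa (stmt3_g θ0 θinf) (m + 1) - stmt3_qa (stmt3_g θ0 θinf) m))
      + cseq θ0 θinf (m + 1) ^ 2
      + cseq θ0 θinf (m + 1) * (θ0 (m + 1 + 1) - θ0 (m + 1)) = 0 := by
    rw [t1, t2, stmt3_d_succ, cseq_succ θ0 θinf m]
    ring
  simp only [forceG0, Nat.add_sub_cancel]
  exact_mod_cast hre

lemma stmt3_unique (q' : ℕ → ℂ) (hb : IsBalancedG0 L θ0 θinf q') :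
    ∀ l, 1 ≤ l → l ≤ L → q' l = ((stmt3_qa (stmt3_g θ0 θinf) l : ℝ) : ℂ) := by
  obtain ⟨hq1, hqne, hqadj, hqF⟩ := hb
  have hrho : ∀ l, 1 ≤ l → l < L →
      ((cseq θ0 θinf l : ℝ) : ℂ) * ((cseq θ0 θinf (l + 1) : ℝ) : ℂ)
        * (q' l / (q' l - q' (l + 1))) = ((stmt3_d θ0 θinf l : ℝ) : ℂ) := by
    intro l hl
    induction l, hl using Nat.le_induction with
    | base =>
      intro h1L
      have hF := hqF 1 le_rfl (by omega)
      simp only [forceG0, Nat.sub_self] at hF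
      rw [cseq_zero] at hF
      simp only [Complex.ofReal_zero, mul_zero, zero_mul, zero_div, sub_zero] at hF
      have hd1 : stmt3_d θ0 θinf 1
          = cseq θ0 θinf 1 ^ 2 + cseq θ0 θinf 1 * (θ0 2 - θ0 1) := by
        simp [stmt3_d, cseq]; ring
      have hd1C : ((stmt3_d θ0 θinf 1 : ℝ) : ℂ)
          = ((cseq θ0 θinf 1 : ℝ) : ℂ) ^ 2
            + ((cseq θ0 θinf 1 : ℝ) : ℂ) * ((θ0 2 : ℝ) - (θ0 1 : ℝ)) := by
        exact_mod_cast hd1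
      linear_combination (-1 : ℂ) * hF - hd1C
    | succ n hn ih =>
      intro hsL
      have ihv := ih (by omega)
      have hF := hqF (n + 1) (by omega) (by omega)
      simp only [forceG0, Nat.add_sub_cancel] at hF
      have hne : q' n - q' (n + 1) ≠ 0 := sub_ne_zero.mpr (hqadj n hn (by omega))
      have hne' : q' (n + 1) - q' n ≠ 0 := by
        rw [← neg_sub]; exact neg_ne_zero.mpr hne
      have hmid : q' (n + 1) / (q' (n + 1) - q' n)
          = 1 - q' n / (q' n - q' (n + 1)) := by
        field_simp
        ring
      have hdC : ((stmt3_d θ0 θinf (n + 1) : ℝ) : ℂ)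
          = ((stmt3_d θ0 θinf n : ℝ) : ℂ)
            + ((cseq θ0 θinf (n + 1) : ℝ) : ℂ)
              * ((θinf (n + 1) : ℝ) + (θ0 (n + 2) : ℝ)) := by
        exact_mod_cast stmt3_d_succ θ0 θinf n
      have hcC : ((cseq θ0 θinf (n + 1) : ℝ) : ℂ)
          = ((cseq θ0 θinf n : ℝ) : ℂ) + ((θ0 (n + 1) : ℝ) + (θinf (n + 1) : ℝ)) := by
        exact_mod_cast cseq_succ θ0 θinf n
      linear_combination (-1 : ℂ) * hF
        - (((cseq θ0 θinf (n + 1) : ℝ) : ℂ) * ((cseq θ0 θinf n : ℝ) : ℂ)) * hmid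
        + ihv - hdC + ((cseq θ0 θinf (n + 1) : ℝ) : ℂ) * hcC
  intro l hl hlL
  induction l, hl using Nat.le_induction with
  | base => rw [hq1]; norm_num [stmt3_qa_one]
  | succ n hn ih =>
    have ihv := ih (by omega)
    have hlt : n < L := by omega
    have hne : q' n - q' (n + 1) ≠ 0 := sub_ne_zero.mpr (hqadj n hn (by omega))
    have hccne : ((cseq θ0 θinf n : ℝ) : ℂ) * ((cseq θ0 θinf (n + 1) : ℝ) : ℂ) ≠ 0 := by
      have := mul_pos (stmt3_c_pos L θ0 θinf hL hΘ1 hemb0 hembinf n hn (by omega))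
        (stmt3_c_pos L θ0 θinf hL hΘ1 hemb0 hembinf (n + 1) (by omega) (by omega))
      exact_mod_cast ne_of_gt this
    have hrC : ((stmt3_r θ0 θinf n : ℝ) : ℂ)
        = ((stmt3_d θ0 θinf n : ℝ) : ℂ)
          / (((cseq θ0 θinf n : ℝ) : ℂ) * ((cseq θ0 θinf (n + 1) : ℝ) : ℂ)) := by
      rw [stmt3_r]; push_cast; ring
    have hrho' : q' n / (q' n - q' (n + 1)) = ((stmt3_r θ0 θinf n : ℝ) : ℂ) := by
      rw [hrC, ← hrho n hn hlt, mul_div_assoc, mul_comm, div_mul_cancel₀ _ hccne]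
    have hrne : ((stmt3_r θ0 θinf n : ℝ) : ℂ) ≠ 0 := by
      have := (stmt3_r_mem L hL θ0 θinf hΘ1 hΘ2 hemb0 hembinf n hn hlt).1
      exact_mod_cast ne_of_gt this
    have hq : ((stmt3_r θ0 θinf n : ℝ) : ℂ) * (q' n - q' (n + 1)) = q' n := by
      rw [← hrho', div_mul_cancel₀ _ hne]
    have hgC : ((stmt3_g θ0 θinf n : ℝ) : ℂ)
        = 1 - 1 / ((stmt3_r θ0 θinf n : ℝ) : ℂ) := by
      rw [stmt3_g]; push_cast; ring
    have hstep : q' (n + 1) = q' n * ((stmt3_g θ0 θinf n : ℝ) : ℂ) := by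
      rw [hgC]
      field_simp
      linear_combination (-1 : ℂ) * hq
    rw [hstep, ihv, stmt3_qa_succ _ n hn]
    push_cast
    ring

end Main

/-!
STATEMENT 3: If `Θ₁ = 0`, `Θ₂ = 0` and the embeddedness conditions hold, then there
exist unique `q_1, …, q_L` with `q_1 = 1`, `q_l ≠ 0`, `q_l ≠ q_{l+1}`, such that
`F_l = 0` for all `1 ≤ l ≤ L`; moreover each `q_l` is real with `(-1)^{l+1} q_l > 0`.
-/
theorem stmt_3 (L : ℕ) (hL : 1 ≤ L) (θ0 θinf : ℕ → ℝ)
    (hΘ1 : ∑ l ∈ Finset.Icc 1 (L + 1), (θ0 l + θinf l) = 0)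
    (hΘ2 : ∑ l ∈ Finset.Icc 1 (L + 1), ((θinf l) ^ 2 - (θ0 l) ^ 2) / 2 = 0)
    (hemb0 : ∀ l, 1 ≤ l → l ≤ L → θ0 (l + 1) < θ0 l)
    (hembinf : ∀ l, 1 ≤ l → l ≤ L → θinf (l + 1) < θinf l) :
    ∃ q : ℕ → ℂ, IsBalancedG0 L θ0 θinf q
      ∧ (∀ l, 1 ≤ l → l ≤ L → ∃ r : ℝ, q l = (r : ℂ) ∧ 0 < (-1 : ℝ) ^ (l + 1) * r)
      ∧ (∀ q' : ℕ → ℂ, IsBalancedG0 L θ0 θinf q' →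
          ∀ l, 1 ≤ l → l ≤ L → q' l = q l) := by
  refine ⟨fun n => ((stmt3_qa (stmt3_g θ0 θinf) n : ℝ) : ℂ), ⟨?_, ?_, ?_, ?_⟩, ?_, ?_⟩
  · norm_num [stmt3_qa_one]
  · intro l hl hlL
    simp only []
    exact_mod_cast Complex.ofReal_ne_zero.mpr
      (stmt3_qa_ne L hL θ0 θinf hΘ1 hΘ2 hemb0 hembinf l hl hlL)
  · intro l hl hlL1 h
    simp only [] at h
    have hreal : stmt3_qa (stmt3_g θ0 θinf) l = stmt3_qa (stmt3_g θ0 θinf) (l + 1) := by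
      exact_mod_cast h
    have s1 := stmt3_sign L hL θ0 θinf hΘ1 hΘ2 hemb0 hembinf l hl (by omega)
    have s2 := stmt3_sign L hL θ0 θinf hΘ1 hΘ2 hemb0 hembinf (l + 1) (by omega) (by omega)
    rw [← hreal] at s2
    have hexp : (-1 : ℝ) ^ (l + 1 + 1) = -((-1 : ℝ) ^ (l + 1)) := by ring
    rw [hexp] at s2
    nlinarith [s1, s2]
  · exact stmt3_force L hL θ0 θinf hΘ1 hΘ2 hemb0 hembinf
  · intro l hl hlL
    exact ⟨stmt3_qa (stmt3_g θ0 θinf) l, rfl,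
      stmt3_sign L hL θ0 θinf hΘ1 hΘ2 hemb0 hembinf l hl hlL⟩
  · intro q' hb l hl hlL
    exact stmt3_unique L hL θ0 θinf hΘ1 hΘ2 hemb0 hembinf q' hb l hl hlL
end

section
/- Pairwise distinct nonzero complex numbers q_1, …, q_n satisfy the balance equations Σ_{1≤j≤n, j≠k} 2 q_k/(q_k − q_j) = n − 1 for every 1 ≤ k ≤ n if and only if there exists a nonzero complex number a such that ∏_{k=1}^{n} (z − q_k) = z^n − a as polynomials; equivalently, if and only if the q_k are, up to a common complex scaling factor, the n-th roots of unity. -/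
open Polynomial Finset

lemma aux_deriv_prod {ι : Type*} [DecidableEq ι] (s : Finset ι) (f : ι → Polynomial ℂ) :
    derivative (∏ i ∈ s, f i) = ∑ i ∈ s, (∏ j ∈ s.erase i, f j) * derivative (f i) := by
  rw [Finset.prod_eq_multiset_prod, Polynomial.derivative_prod, Finset.sum_eq_multiset_sum]
  refine congrArg Multiset.sum (Multiset.map_congr rfl fun i hi => ?_)
  rw [Finset.prod_eq_multiset_prod, Finset.erase_val]

lemma aux_D1 {n : ℕ} (q : Fin n → ℂ) :
    derivative (∏ k, (X - C (q k))) =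
      ∑ i, ∏ j ∈ Finset.univ.erase i, (X - C (q j)) := by
  rw [aux_deriv_prod]
  simp

lemma aux_eval_D1 {n : ℕ} (q : Fin n → ℂ) (k : Fin n) :
    eval (q k) (derivative (∏ k, (X - C (q k)))) =
      ∏ j ∈ Finset.univ.erase k, (q k - q j) := by
  rw [aux_D1, eval_finset_sum]
  rw [Finset.sum_eq_single k]
  · simp [eval_prod]
  · intro i _ hik
    rw [eval_prod]
    exact Finset.prod_eq_zero (Finset.mem_erase.2 ⟨hik.symm, Finset.mem_univ k⟩)
      (by simp)
  · simp

lemma aux_eval_D2 {n : ℕ} (q : Fin n → ℂ) (k : Fin n) :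
    eval (q k) (derivative (derivative (∏ k, (X - C (q k))))) =
      2 * ∑ j ∈ Finset.univ.erase k,
        ∏ l ∈ (Finset.univ.erase k).erase j, (q k - q l) := by
  rw [aux_D1, derivative_sum]
  have hterm : ∀ i : Fin n,
      eval (q k) (derivative (∏ j ∈ Finset.univ.erase i, (X - C (q j)))) =
        ∑ l ∈ Finset.univ.erase i,
          eval (q k) (∏ m ∈ (Finset.univ.erase i).erase l, (X - C (q m))) := by
    intro i
    rw [aux_deriv_prod]
    simp [eval_finset_sum]
  rw [eval_finset_sum]
  calc (∑ i, eval (q k) (derivative (∏ j ∈ Finset.univ.erase i, (X - C (q j)))))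
      = ∑ i, ∑ l ∈ Finset.univ.erase i,
          eval (q k) (∏ m ∈ (Finset.univ.erase i).erase l, (X - C (q m))) := by
        exact Finset.sum_congr rfl fun i _ => hterm i
    _ = 2 * ∑ j ∈ Finset.univ.erase k,
          ∏ l ∈ (Finset.univ.erase k).erase j, (q k - q l) := by
        rw [← Finset.add_sum_erase _ _ (Finset.mem_univ k)]
        have h1 : ∑ l ∈ Finset.univ.erase k,
            eval (q k) (∏ m ∈ (Finset.univ.erase k).erase l, (X - C (q m))) =
            ∑ j ∈ Finset.univ.erase k,
              ∏ l ∈ (Finset.univ.erase k).erase j, (q k - q l) := by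
          refine Finset.sum_congr rfl fun l _ => ?_
          simp [eval_prod]
        have h2 : ∀ i ∈ Finset.univ.erase k,
            (∑ l ∈ Finset.univ.erase i,
              eval (q k) (∏ m ∈ (Finset.univ.erase i).erase l, (X - C (q m)))) =
            ∏ l ∈ (Finset.univ.erase k).erase i, (q k - q l) := by
          intro i hi
          have hik : i ≠ k := (Finset.mem_erase.1 hi).1
          rw [Finset.sum_eq_single k]
          · rw [eval_prod, Finset.erase_right_comm]
            simp
          · intro l hl hlk
            rw [eval_prod]
            refine Finset.prod_eq_zero (Finset.mem_erase.2 ⟨hlk.symm,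
              Finset.mem_erase.2 ⟨fun h => hik h.symm, Finset.mem_univ k⟩⟩) (by simp)
          · intro h
            exact absurd (Finset.mem_erase.2 ⟨fun h' => hik h'.symm, Finset.mem_univ k⟩) h
        rw [h1, Finset.sum_congr rfl h2]
        ring

lemma aux_balance_iff {n : ℕ} (q : Fin n → ℂ) (hinj : Function.Injective q) (k : Fin n) :
    (∑ j ∈ Finset.univ.erase k, 2 * q k / (q k - q j) = (n : ℂ) - 1) ↔
      2 * q k * (∑ j ∈ Finset.univ.erase k,
          ∏ l ∈ (Finset.univ.erase k).erase j, (q k - q l)) =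
        ((n : ℂ) - 1) * ∏ j ∈ Finset.univ.erase k, (q k - q j) := by
  set Pi := ∏ j ∈ Finset.univ.erase k, (q k - q j) with hPi
  have hPine : Pi ≠ 0 := by
    refine Finset.prod_ne_zero_iff.2 fun j hj => ?_
    have : j ≠ k := (Finset.mem_erase.1 hj).1
    exact sub_ne_zero.2 fun h => this (hinj h.symm)
  have h1 : ∀ j ∈ Finset.univ.erase k,
      2 * q k / (q k - q j) =
        2 * q k * (∏ l ∈ (Finset.univ.erase k).erase j, (q k - q l)) / Pi := by
    intro j hj
    have hPj : Pi = (q k - q j) * ∏ l ∈ (Finset.univ.erase k).erase j, (q k - q l) :=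
      (Finset.mul_prod_erase _ _ hj).symm
    have hRne : (∏ l ∈ (Finset.univ.erase k).erase j, (q k - q l)) ≠ 0 := by
      refine Finset.prod_ne_zero_iff.2 fun l hl => ?_
      have : l ≠ k := (Finset.mem_erase.1 (Finset.mem_erase.1 hl).2).1
      exact sub_ne_zero.2 fun h => this (hinj h.symm)
    rw [hPj, mul_div_mul_right _ _ hRne]
  rw [Finset.sum_congr rfl h1, ← Finset.sum_div, ← Finset.mul_sum,
    div_eq_iff hPine, mul_comm ((n : ℂ) - 1) Pi]

/-!
STATEMENT 4: Pairwise distinct nonzero complex numbers `q_1, …, q_n` satisfy the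
balance equations `Σ_{j ≠ k} 2 q_k/(q_k - q_j) = n - 1` for every `k` if and only
if there is a nonzero `a` with `∏ (z - q_k) = z^n - a` (i.e. the `q_k` are, up to a
common scaling, the `n`-th roots of unity).
-/
theorem stmt_4 (n : ℕ) (hn : 1 ≤ n) (q : Fin n → ℂ)
    (hq0 : ∀ k, q k ≠ 0) (hinj : Function.Injective q) :
    (∀ k, ∑ j ∈ Finset.univ.erase k, 2 * q k / (q k - q j) = (n : ℂ) - 1) ↔
      ∃ a : ℂ, a ≠ 0 ∧
        ∏ k, (Polynomial.X - Polynomial.C (q k)) = Polynomial.X ^ n - Polynomial.C a := by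
  constructor
  · intro hbal
    obtain rfl | hn2 : n = 1 ∨ 2 ≤ n := by omega
    · refine ⟨q 0, hq0 0, ?_⟩
      rw [Fin.prod_univ_one, pow_one]
    set P : Polynomial ℂ := ∏ k, (X - C (q k)) with hPdef
    have hmon : P.Monic := monic_prod_of_monic _ _ fun i _ => monic_X_sub_C _
    have hPdeg : P.natDegree = n := by
      rw [hPdef, natDegree_prod _ _ fun i _ => X_sub_C_ne_zero (q i)]
      simp
    set D : Polynomial ℂ := derivative P with hDdef
    have hroot : ∀ k, (X * derivative D - C ((n : ℂ) - 1) * D).eval (q k) = 0 := by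
      intro k
      have hb := (aux_balance_iff q hinj k).1 (hbal k)
      simp only [eval_sub, eval_mul, eval_X, eval_C]
      rw [hDdef, hPdef, aux_eval_D2 q k, aux_eval_D1 q k]
      linear_combination hb
    have hdeg : (X * derivative D - C ((n : ℂ) - 1) * D).natDegree < n := by
      have h1 : D.natDegree ≤ n - 1 := by
        have h := natDegree_derivative_le P; rw [hPdeg] at h; exact h
      have h2 : (derivative D).natDegree ≤ n - 2 :=
        le_trans (natDegree_derivative_le D) (by omega)
      have h3 : (X * derivative D).natDegree ≤ 1 + (n - 2) :=
        le_trans (natDegree_mul_le) (by gcongr; exact natDegree_X_le)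
      have h4 : (C ((n : ℂ) - 1) * D).natDegree ≤ 0 + (n - 1) :=
        le_trans (natDegree_mul_le) (by gcongr; exact (natDegree_C ((n : ℂ) - 1)).le)
      refine lt_of_le_of_lt (natDegree_sub_le _ _) ?_
      omega
    have hzero : X * derivative D - C ((n : ℂ) - 1) * D = 0 :=
      eq_zero_of_natDegree_lt_card_of_eval_eq_zero _ hinj hroot (by simpa using hdeg)
    have heq : X * derivative D = C ((n : ℂ) - 1) * D := sub_eq_zero.1 hzero
    have hcne : (n : ℂ) - 1 ≠ 0 := by
      rw [sub_ne_zero]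
      intro h
      have : n = 1 := by exact_mod_cast h
      omega
    have hcast : (n : ℂ) - 1 = ((n - 1 : ℕ) : ℂ) := by
      rw [Nat.cast_sub hn, Nat.cast_one]
    have hDm : ∀ m, m ≠ n - 1 → D.coeff m = 0 := by
      intro m hm
      cases m with
      | zero =>
        have h0 := congrArg (fun p => Polynomial.coeff p 0) heq
        simp only [mul_coeff_zero, coeff_X_zero, zero_mul, coeff_C_mul, coeff_C_zero] at h0
        rcases mul_eq_zero.1 h0.symm with h | h
        · exact absurd h hcne
        · exact h
      | succ m =>
        have h0 := congrArg (fun p => Polynomial.coeff p (m + 1)) heq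
        simp only [coeff_X_mul, coeff_C_mul, coeff_derivative] at h0
        have hne : ((m : ℂ) + 1) ≠ (n : ℂ) - 1 := by
          rw [hcast]
          intro h
          apply hm
          exact_mod_cast h
        have h1 : D.coeff (m + 1) * (((m : ℂ) + 1) - ((n : ℂ) - 1)) = 0 := by
          linear_combination h0
        rcases mul_eq_zero.1 h1 with h | h
        · exact h
        · exact absurd (sub_eq_zero.1 h) hne
    have hPm : ∀ m, m ≠ 0 → m ≠ n → P.coeff m = 0 := by
      intro m hm0 hmn
      obtain ⟨m, rfl⟩ : ∃ m', m = m' + 1 := ⟨m - 1, by omega⟩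
      have hd : D.coeff m = 0 := hDm m (by omega)
      rw [hDdef, coeff_derivative] at hd
      rcases mul_eq_zero.1 hd with h | h
      · exact h
      · exact absurd h (Nat.cast_add_one_ne_zero m)
    have hPn : P.coeff n = 1 := by
      rw [← hPdeg]; exact hmon.coeff_natDegree
    have hP0 : P.coeff 0 ≠ 0 := by
      rw [coeff_zero_eq_eval_zero, hPdef, eval_prod]
      refine Finset.prod_ne_zero_iff.2 fun i _ => ?_
      simp only [eval_sub, eval_X, eval_C, zero_sub]
      exact neg_ne_zero.2 (hq0 i)
    refine ⟨-(P.coeff 0), neg_ne_zero.2 hP0, ?_⟩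
    apply Polynomial.ext
    intro m
    rw [coeff_sub, coeff_X_pow, coeff_C]
    by_cases h0 : m = 0
    · subst h0
      have hne : ¬(0 = n) := by omega
      simp [hne]
    · by_cases hn' : m = n
      · subst hn'
        simp [hPn, h0]
      · rw [hPm m h0 hn']
        simp [hn', h0]
  · rintro ⟨a, ha, hP⟩ k
    rw [aux_balance_iff q hinj k]
    have h1 : (∏ j ∈ Finset.univ.erase k, (q k - q j)) = (n : ℂ) * q k ^ (n - 1) := by
      rw [← aux_eval_D1 q k, hP, derivative_sub, derivative_X_pow, derivative_C, sub_zero]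
      simp
    have h2 : 2 * (∑ j ∈ Finset.univ.erase k,
        ∏ l ∈ (Finset.univ.erase k).erase j, (q k - q l)) =
        (n : ℂ) * (((n - 1 : ℕ)) : ℂ) * q k ^ (n - 1 - 1) := by
      rw [← aux_eval_D2 q k, hP, derivative_sub, derivative_C, sub_zero,
        derivative_X_pow, derivative_C_mul, derivative_X_pow]
      simp
      ring
    have hc : ((n - 1 : ℕ) : ℂ) = (n : ℂ) - 1 := by
      rw [Nat.cast_sub hn, Nat.cast_one]
    have hq' : q k * q k ^ (n - 1 - 1) * ((n - 1 : ℕ) : ℂ) =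
        q k ^ (n - 1) * ((n - 1 : ℕ) : ℂ) := by
      rcases Nat.lt_or_ge n 2 with h | h
      · have hn1 : n = 1 := by omega
        subst hn1
        simp
      · have he : n - 1 - 1 + 1 = n - 1 := by omega
        have hpw : q k ^ (n - 1) = q k * q k ^ (n - 1 - 1) := by
          conv_lhs => rw [← he]
          rw [pow_succ']
        rw [hpw]
    calc 2 * q k * (∑ j ∈ Finset.univ.erase k,
            ∏ l ∈ (Finset.univ.erase k).erase j, (q k - q l))
        = q k * (2 * (∑ j ∈ Finset.univ.erase k,
            ∏ l ∈ (Finset.univ.erase k).erase j, (q k - q l))) := by ring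
      _ = q k * ((n : ℂ) * (((n - 1 : ℕ)) : ℂ) * q k ^ (n - 1 - 1)) := by rw [h2]
      _ = (q k * q k ^ (n - 1 - 1) * ((n - 1 : ℕ) : ℂ)) * (n : ℂ) := by ring
      _ = (q k ^ (n - 1) * ((n - 1 : ℕ) : ℂ)) * (n : ℂ) := by rw [hq']
      _ = ((n : ℂ) - 1) * ((n : ℂ) * q k ^ (n - 1)) := by rw [← hc]; ring
      _ = ((n : ℂ) - 1) * ∏ j ∈ Finset.univ.erase k, (q k - q j) := by rw [← h1]
end

section
/- Let q_k = exp(2πik/n) for 1 ≤ k ≤ n be the n-th roots of unity, and let J be the n×n complex matrix with entries J_{kj} = 2 q_k/(q_k − q_j)² for j ≠ k and J_{kk} = −Σ_{1≤i≤n, i≠k} 2 q_i/(q_k − q_i)². Then J has rank n − 1, and the kernel of J is the one-dimensional subspace spanned by the vector (q_1, …, q_n). -/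
open Complex Finset

private lemma unit_conj (z : ℂ) (h : ‖z‖ = 1) : (starRingEnd ℂ) z = z⁻¹ := by
  have h1 : (starRingEnd ℂ) z * z = 1 := by
    rw [mul_comm, Complex.mul_conj, Complex.normSq_eq_norm_sq, h]; norm_num

  exact eq_inv_of_mul_eq_one_left h1

private lemma unit_re_lt_one (z : ℂ) (h : ‖z‖ = 1) (h1 : z ≠ 1) : z.re < 1 := by
  rcases lt_or_eq_of_le (le_trans (Complex.re_le_norm z) (le_of_eq h)) with h2 | h2
  · exact h2
  · exfalso; apply h1
    have hns : z.re * z.re + z.im * z.im = 1 := by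
      have := Complex.normSq_eq_norm_sq z
      rw [h] at this; rw [← Complex.normSq_apply, this]; norm_num
    have him : z.im = 0 := by nlinarith
    apply Complex.ext <;> simp [h2, him]



/-!
STATEMENT 5: Let `q k = exp(2πik/n)`, `1 ≤ k ≤ n`, be the `n`-th roots of unity
(indexed below by `k : Fin n` via `k ↦ exp(2πi(k+1)/n)`), and let `J` be the
Jacobian matrix of the forces, with `J k j = 2 q_k/(q_k - q_j)²` for `j ≠ k` and
`J k k = -Σ_{i ≠ k} 2 q_i/(q_k - q_i)²`.  Then `J` has rank `n - 1` and its kernel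
is spanned by the vector `q`.
-/
theorem stmt_5 (n : ℕ) (hn : 2 ≤ n) (q : Fin n → ℂ)
    (hq : ∀ k : Fin n,
      q k = Complex.exp (2 * (Real.pi : ℂ) * Complex.I * (((k : ℕ) : ℂ) + 1) / n))
    (J : Matrix (Fin n) (Fin n) ℂ)
    (hJoff : ∀ k j, k ≠ j → J k j = 2 * q k / (q k - q j) ^ 2)
    (hJdiag : ∀ k, J k k = -∑ i ∈ Finset.univ.erase k, 2 * q i / (q k - q i) ^ 2) :
    J.rank = n - 1 ∧ LinearMap.ker J.mulVecLin = Submodule.span ℂ {q} := by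
  have hn0 : (n : ℂ) ≠ 0 := Nat.cast_ne_zero.mpr (by omega)
  have hq0 : ∀ k, q k ≠ 0 := fun k => by rw [hq k]; exact Complex.exp_ne_zero _
  -- |q k| = 1
  have habs : ∀ k, ‖q k‖ = 1 := by
    intro k
    have : (2 * (Real.pi : ℂ) * Complex.I * (((k : ℕ) : ℂ) + 1) / n)
        = ((2 * Real.pi * (((k : ℕ) : ℝ) + 1) / n : ℝ) : ℂ) * Complex.I := by
      push_cast; field_simp
    rw [hq k, this, Complex.norm_exp_ofReal_mul_I]
  -- distinctness
  have hne : ∀ k j : Fin n, k ≠ j → q k ≠ q j := by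
    intro k j hkj h
    rw [hq k, hq j] at h
    rw [Complex.exp_eq_exp_iff_exists_int] at h
    obtain ⟨m, hm⟩ := h
    have h2 : ((k : ℕ) : ℂ) - ((j : ℕ) : ℂ) = (m : ℂ) * n := by
      have hπ : (2 * (Real.pi : ℂ) * Complex.I) ≠ 0 := by
        simp [Real.pi_ne_zero, Complex.I_ne_zero]
      field_simp at hm
      have h3 : (2 * (Real.pi : ℂ) * Complex.I) * (((k : ℕ) : ℂ) + 1)
          = (2 * (Real.pi : ℂ) * Complex.I) * ((((j : ℕ) : ℂ) + 1) + (m : ℂ) * n) := by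
        linear_combination (2 * (Real.pi : ℂ) * Complex.I) * hm
      have h4 := mul_left_cancel₀ hπ h3
      linear_combination h4
    have h5 : ((k : ℕ) : ℤ) - ((j : ℕ) : ℤ) = m * n := by exact_mod_cast h2
    have hk := k.isLt; have hj := j.isLt
    have : (k : ℕ) = (j : ℕ) := by
      rcases lt_trichotomy m 0 with h | h | h
      · have : m * (n:ℤ) ≤ -1 * n := mul_le_mul_of_nonneg_right (by omega) (by omega)
        omega
      · subst h; omega
      · have : 1 * (n:ℤ) ≤ m * n := mul_le_mul_of_nonneg_right (by omega) (by omega)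
        omega
    exact hkj (Fin.ext this)
  -- main identity: J k j * q j = -(1 - Re(q k / q j))⁻¹ for k ≠ j
  have hzabs : ∀ k j : Fin n, ‖q k / q j‖ = 1 := by
    intro k j; rw [norm_div, habs k, habs j]; norm_num
  have hre1 : ∀ k j : Fin n, k ≠ j → (q k / q j).re < 1 := by
    intro k j hkj
    apply unit_re_lt_one _ (hzabs k j)
    intro h; exact hne k j hkj ((div_eq_one_iff_eq (hq0 j)).mp h)
  have hrsym : ∀ k j : Fin n, (q j / q k).re = (q k / q j).re := by
    intro k j
    have : q j / q k = (starRingEnd ℂ) (q k / q j) := by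
      rw [unit_conj _ (hzabs k j), inv_div]
    rw [this, Complex.conj_re]
  have hmain : ∀ k j : Fin n, k ≠ j →
      J k j * q j = -(((1 - (q k / q j).re)⁻¹ : ℝ) : ℂ) := by
    intro k j hkj
    have hzsum : q k / q j + (q k / q j)⁻¹ = ((2 * (q k / q j).re : ℝ) : ℂ) := by
      rw [← unit_conj _ (hzabs k j), Complex.add_conj]
    have hsq : (q k - q j) ^ 2 = q k * q j * (((2 * (q k / q j).re : ℝ) : ℂ) - 2) := by
      rw [← hzsum]
      field_simp [hq0 k, hq0 j]
      ring
    rw [hJoff k j hkj, hsq]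
    have hr1 : (q k / q j).re ≠ 1 := ne_of_lt (hre1 k j hkj)
    have hr1' : (1 : ℂ) - ((q k / q j).re : ℂ) ≠ 0 := by
      rw [sub_ne_zero]
      exact fun h => hr1 (by exact_mod_cast h.symm)
    simp only [Complex.ofReal_mul, Complex.ofReal_ofNat, Complex.ofReal_inv,
      Complex.ofReal_sub, Complex.ofReal_one]
    have h2r : (2:ℂ) * ((q k / q j).re : ℂ) - 2 ≠ 0 := by
      intro h; apply hr1'; linear_combination -h/2
    field_simp [hq0 k, hq0 j, hr1', h2r]
    ring
    have h' : (-1 + ((q k * (q j)⁻¹).re : ℂ)) ≠ 0 := by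
      rw [← div_eq_mul_inv]; intro h; apply hr1'; linear_combination -h
    field_simp
    rw [div_eq_iff (by rwa [← div_eq_mul_inv] at h')]
    ring
  -- weights
  set u : Fin n → Fin n → ℝ := fun k j => if k = j then 0 else (1 - (q k / q j).re)⁻¹ with hu
  have hupos : ∀ k j, k ≠ j → 0 < u k j := by
    intro k j h
    simp only [hu, if_neg h]
    exact inv_pos.mpr (by linarith [hre1 k j h])
  have hunn : ∀ k j, 0 ≤ u k j := by
    intro k j
    by_cases h : k = j
    · simp [hu, h]
    · exact le_of_lt (hupos k j h)
  have husymm : ∀ k j, u k j = u j k := by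
    intro k j
    by_cases h : k = j
    · subst h; rfl
    · simp only [hu, if_neg h, if_neg (Ne.symm h), hrsym k j]
  have hmain' : ∀ k j, k ≠ j → J k j * q j = -((u k j : ℝ) : ℂ) := by
    intro k j h
    rw [hmain k j h]
    simp [hu, if_neg h]
  -- row sums: J.mulVec q = 0
  have hdiag2 : ∀ k, J k k * q k = -∑ i ∈ Finset.univ.erase k, J k i * q i := by
    intro k
    rw [hJdiag k, neg_mul, Finset.sum_mul, neg_inj]
    refine Finset.sum_congr rfl fun i hi => ?_
    rw [hJoff k i (Finset.ne_of_mem_erase hi).symm]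
    ring
  have hJq : J.mulVec q = 0 := by
    funext k
    have : J.mulVec q k = ∑ j, J k j * q j := by simp [Matrix.mulVec, dotProduct]
    rw [this, ← Finset.add_sum_erase _ _ (Finset.mem_univ k), hdiag2 k]
    simp
  have hJq' : ∀ k, ∑ j, J k j * q j = 0 := by
    intro k
    have := congrFun hJq k
    simpa [Matrix.mulVec, dotProduct] using this
  -- kernel ⊆ span
  have key : ∀ x : Fin n → ℂ, J.mulVec x = 0 → x ∈ Submodule.span ℂ {q} := by
    intro x hx
    set y : Fin n → ℂ := fun k => x k / q k with hy
    have hxq : ∀ k, x k = q k * y k := by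
      intro k
      show x k = q k * (x k / q k)
      rw [← mul_div_assoc, mul_div_cancel_left₀ _ (hq0 k)]
    have hx' : ∀ k, ∑ j, J k j * q j * y j = 0 := by
      intro k
      have := congrFun hx k
      simp only [Matrix.mulVec, dotProduct, Pi.zero_apply] at this
      rw [← this]
      exact Finset.sum_congr rfl fun j _ => by rw [hxq j]; ring
    have hT : ∀ k, ∑ j, (J k j * q j) * (y j - y k) * (starRingEnd ℂ) (y k) = 0 := by
      intro k
      have hexp : ∀ j : Fin n, (J k j * q j) * (y j - y k) * (starRingEnd ℂ) (y k)
          = (J k j * q j * y j) * (starRingEnd ℂ) (y k)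
            - (J k j * q j) * (y k * (starRingEnd ℂ) (y k)) := fun j => by ring
      rw [Finset.sum_congr rfl fun j _ => hexp j, Finset.sum_sub_distrib,
        ← Finset.sum_mul, ← Finset.sum_mul, hx' k, hJq' k]
      ring
    have hTu : ∑ k, ∑ j, -((u k j : ℝ) : ℂ) * (y j - y k) * (starRingEnd ℂ) (y k) = 0 := by
      rw [← Finset.sum_eq_zero fun k (_ : k ∈ Finset.univ) => hT k]
      refine Finset.sum_congr rfl fun k _ => Finset.sum_congr rfl fun j _ => ?_
      by_cases h : k = j
      · subst h; simp
      · rw [hmain' k j h]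
    have hswap : ∑ k, ∑ j, -((u k j : ℝ) : ℂ) * (y k - y j) * (starRingEnd ℂ) (y j) = 0 := by
      rw [Finset.sum_comm] at hTu
      rw [← hTu]
      exact Finset.sum_congr rfl fun k _ => Finset.sum_congr rfl fun j _ => by
        rw [husymm k j]
    have hsum0 : ∑ k, ∑ j, ((u k j : ℝ) : ℂ) * ((Complex.normSq (y k - y j) : ℝ) : ℂ) = 0 := by
      have h3 : ∀ k j : Fin n, ((u k j : ℝ) : ℂ) * ((Complex.normSq (y k - y j) : ℝ) : ℂ)
          = (-((u k j : ℝ) : ℂ) * (y j - y k) * (starRingEnd ℂ) (y k))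
            + (-((u k j : ℝ) : ℂ) * (y k - y j) * (starRingEnd ℂ) (y j)) := by
        intro k j
        rw [← Complex.mul_conj (y k - y j), map_sub]
        ring
      calc ∑ k, ∑ j, ((u k j : ℝ) : ℂ) * ((Complex.normSq (y k - y j) : ℝ) : ℂ)
          = (∑ k, ∑ j, -((u k j : ℝ) : ℂ) * (y j - y k) * (starRingEnd ℂ) (y k))
            + (∑ k, ∑ j, -((u k j : ℝ) : ℂ) * (y k - y j) * (starRingEnd ℂ) (y j)) := by
            rw [← Finset.sum_add_distrib]
            exact Finset.sum_congr rfl fun k _ => by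
              rw [← Finset.sum_add_distrib]
              exact Finset.sum_congr rfl fun j _ => h3 k j
        _ = 0 := by rw [hTu, hswap, add_zero]
    have hreal : ∑ k, ∑ j, u k j * Complex.normSq (y k - y j) = (0 : ℝ) := by
      have : ((∑ k, ∑ j, u k j * Complex.normSq (y k - y j) : ℝ) : ℂ) = 0 := by
        push_cast
        exact hsum0
      exact_mod_cast this
    have hterm : ∀ k j, u k j * Complex.normSq (y k - y j) = 0 := by
      have h1 := (Finset.sum_eq_zero_iff_of_nonneg fun k _ =>
        Finset.sum_nonneg fun j _ =>
          mul_nonneg (hunn k j) (Complex.normSq_nonneg _)).mp hreal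
      intro k j
      exact (Finset.sum_eq_zero_iff_of_nonneg fun j _ =>
        mul_nonneg (hunn k j) (Complex.normSq_nonneg _)).mp
        (h1 k (Finset.mem_univ k)) j (Finset.mem_univ j)
    have hyconst : ∀ k j, y k = y j := by
      intro k j
      by_cases h : k = j
      · rw [h]
      · have h1 := hterm k j
        have h2 := (hupos k j h).ne'
        have h3 : Complex.normSq (y k - y j) = 0 := by
          rcases mul_eq_zero.mp h1 with h4 | h4
          · exact absurd h4 h2
          · exact h4
        exact sub_eq_zero.mp (Complex.normSq_eq_zero.mp h3)
    refine Submodule.mem_span_singleton.mpr ⟨y ⟨0, by omega⟩, ?_⟩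
    funext k
    rw [Pi.smul_apply, smul_eq_mul, hxq k, hyconst k ⟨0, by omega⟩]
    ring
  -- assemble
  have hker : LinearMap.ker J.mulVecLin = Submodule.span ℂ {q} := by
    apply le_antisymm
    · intro x hx
      exact key x (by simpa [Matrix.mulVecLin_apply] using hx)
    · rw [Submodule.span_le, Set.singleton_subset_iff]
      exact LinearMap.mem_ker.mpr (by simpa [Matrix.mulVecLin_apply] using hJq)
  refine ⟨?_, hker⟩
  have hqne : q ≠ 0 := fun h => hq0 ⟨0, by omega⟩ (by rw [h]; rfl)
  have hrn := LinearMap.finrank_range_add_finrank_ker J.mulVecLin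
  rw [hker, finrank_span_singleton hqne] at hrn
  have hfr : Module.finrank ℂ (Fin n → ℂ) = n := by simp
  rw [hfr] at hrn
  have : J.rank = Module.finrank ℂ (LinearMap.range J.mulVecLin) := rfl
  omega
end

section
/- Let n_1, n_2 ≥ 1 be integers, let μ = lcm(n_1, n_2), and let q be a complex number with |q| < 1. For 1 ≤ j ≤ n_1 and 1 ≤ k ≤ n_2, set x_{j,k} = q·exp(2πi(k/n_2 − j/n_1)). Then Σ_{j=1}^{n_1} Σ_{k=1}^{n_2} x_{j,k}/(1 − x_{j,k}) = n_1 n_2 · q^μ/(1 − q^μ). In particular, as q → 0 the leading term of this sum is n_1 n_2 q^μ. -/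
/-!
STATEMENT 8: With `μ = lcm(n₁, n₂)`, `|q| < 1` and
`x_{j,k} = q · exp(2πi(k/n₂ - j/n₁))`, one has
`Σ_{j=1}^{n₁} Σ_{k=1}^{n₂} x_{j,k}/(1 - x_{j,k}) = n₁ n₂ q^μ/(1 - q^μ)`.
-/
open Complex Finset

/-- Sum of n-th roots of unity powers. -/
lemma sum_exp_icc (n : ℕ) (hn : 1 ≤ n) (m : ℤ) :
    ∑ k ∈ Finset.Icc 1 n, Complex.exp (2 * (Real.pi : ℂ) * Complex.I * m * k / n)
      = if (n : ℤ) ∣ m then (n : ℂ) else 0 := by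
  have hn0 : (n : ℂ) ≠ 0 := Nat.cast_ne_zero.mpr (by omega)
  set w : ℂ := Complex.exp (2 * (Real.pi : ℂ) * Complex.I * m / n) with hw
  have hwk : ∀ k : ℕ, Complex.exp (2 * (Real.pi : ℂ) * Complex.I * m * k / n) = w ^ k := by
    intro k
    rw [hw, ← Complex.exp_nat_mul]
    ring_nf
  have hwn : w ^ n = 1 := by
    rw [hw, ← Complex.exp_nat_mul]
    have : (n : ℂ) * (2 * (Real.pi : ℂ) * Complex.I * m / n) = (m : ℂ) * (2 * Real.pi * Complex.I) := by
      field_simp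
    rw [this]
    exact_mod_cast Complex.exp_int_mul_two_pi_mul_I m
  have hiff : w = 1 ↔ (n : ℤ) ∣ m := by
    rw [hw, Complex.exp_eq_one_iff]
    constructor
    · rintro ⟨t, ht⟩
      refine ⟨t, ?_⟩
      have h2 : (2 * (Real.pi : ℂ) * Complex.I) ≠ 0 := by
        simp [Real.pi_ne_zero, Complex.I_ne_zero]
      have hm : (2 * (Real.pi : ℂ) * Complex.I) * (m : ℂ)
          = (2 * (Real.pi : ℂ) * Complex.I) * (((n : ℤ) * t : ℤ) : ℂ) := by
        push_cast
        field_simp at ht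
        linear_combination (2 * (Real.pi : ℂ) * Complex.I) * ht
      have : (m : ℂ) = (((n : ℤ) * t : ℤ) : ℂ) := mul_left_cancel₀ h2 hm
      exact_mod_cast this
    · rintro ⟨t, rfl⟩
      exact ⟨t, by push_cast; field_simp⟩
  simp only [hwk]
  rw [← Finset.Ico_add_one_right_eq_Icc, Finset.sum_Ico_eq_sum_range]
  simp only [Nat.add_sub_cancel]
  by_cases hw1 : w = 1
  · simp [hw1, hiff.mp hw1]
  · rw [if_neg (fun h => hw1 (hiff.mpr h))]
    have : ∑ i ∈ Finset.range n, w ^ (1 + i) = w * ((w ^ n - 1) / (w - 1)) := by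
      rw [← geom_sum_eq hw1, Finset.mul_sum]
      exact Finset.sum_congr rfl fun i _ => by rw [pow_add, pow_one]
    rw [this, hwn, sub_self, zero_div, mul_zero]

lemma key_geom {x : ℂ} (hx : ‖x‖ < 1) :
    HasSum (fun m : ℕ => x ^ (m + 1)) (x / (1 - x)) := by
  have h : ‖x‖ < 1 := hx
  have := (hasSum_geometric_of_norm_lt_one h).mul_left x
  have heq : (fun m : ℕ => x ^ (m + 1)) = fun m : ℕ => x * x ^ m := by
    funext m; rw [pow_succ]; ring
  rw [heq, div_eq_mul_inv]
  exact this

theorem stmt_8 (n₁ n₂ : ℕ) (h₁ : 1 ≤ n₁) (h₂ : 1 ≤ n₂) (q : ℂ)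
    (hq : ‖q‖ < 1) :
    ∑ j ∈ Finset.Icc 1 n₁, ∑ k ∈ Finset.Icc 1 n₂,
        (q * Complex.exp (2 * (Real.pi : ℂ) * Complex.I * ((k : ℂ) / n₂ - (j : ℂ) / n₁)))
          / (1 - q * Complex.exp (2 * (Real.pi : ℂ) * Complex.I * ((k : ℂ) / n₂ - (j : ℂ) / n₁)))
      = (n₁ : ℂ) * (n₂ : ℂ) * q ^ Nat.lcm n₁ n₂ / (1 - q ^ Nat.lcm n₁ n₂) := by

  classical
  set μ := Nat.lcm n₁ n₂ with hμdef
  have hμ1 : 1 ≤ μ := Nat.one_le_iff_ne_zero.mpr (Nat.lcm_ne_zero (by omega) (by omega))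
  set c : ℂ := 2 * (Real.pi : ℂ) * Complex.I with hc
  -- the modulus of each x_{j,k} is |q|
  have habs : ∀ j k : ℕ, ‖
      (q * Complex.exp (c * ((k : ℂ) / n₂ - (j : ℂ) / n₁)))‖ < 1 := by
    intro j k
    have hre : (c * ((k : ℂ) / n₂ - (j : ℂ) / n₁)).re = 0 := by
      have : ((k : ℂ) / n₂ - (j : ℂ) / n₁) = (((k : ℝ) / n₂ - (j : ℝ) / n₁ : ℝ) : ℂ) := by
        push_cast; ring
      rw [hc, this]
      simp [Complex.mul_re, Complex.mul_im]
    rw [norm_mul, Complex.norm_exp, hre, Real.exp_zero, mul_one]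
    exact hq
  -- each term is the sum of a geometric series
  have H : HasSum
      (fun m : ℕ => ∑ j ∈ Finset.Icc 1 n₁, ∑ k ∈ Finset.Icc 1 n₂,
        (q * Complex.exp (c * ((k : ℂ) / n₂ - (j : ℂ) / n₁))) ^ (m + 1))
      (∑ j ∈ Finset.Icc 1 n₁, ∑ k ∈ Finset.Icc 1 n₂,
        (q * Complex.exp (c * ((k : ℂ) / n₂ - (j : ℂ) / n₁)))
          / (1 - q * Complex.exp (c * ((k : ℂ) / n₂ - (j : ℂ) / n₁)))) :=
    hasSum_sum fun j _ => hasSum_sum fun k _ => key_geom (habs j k)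
  -- compute the inner double sum for each m
  have hterm : ∀ m : ℕ,
      (∑ j ∈ Finset.Icc 1 n₁, ∑ k ∈ Finset.Icc 1 n₂,
        (q * Complex.exp (c * ((k : ℂ) / n₂ - (j : ℂ) / n₁))) ^ (m + 1))
      = if μ ∣ (m + 1) then (n₁ : ℂ) * n₂ * q ^ (m + 1) else 0 := by
    intro m
    have step1 : ∀ j ∈ Finset.Icc 1 n₁, ∀ k ∈ Finset.Icc 1 n₂,
        (q * Complex.exp (c * ((k : ℂ) / n₂ - (j : ℂ) / n₁))) ^ (m + 1)
        = Complex.exp (c * ((-((m : ℤ) + 1) : ℤ) : ℂ) * j / n₁)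
          * (q ^ (m + 1) * Complex.exp (c * (((m : ℤ) + 1 : ℤ) : ℂ) * k / n₂)) := by
      intro j _ k _
      have hn₁ : (n₁ : ℂ) ≠ 0 := Nat.cast_ne_zero.mpr (by omega)
      have hn₂ : (n₂ : ℂ) ≠ 0 := Nat.cast_ne_zero.mpr (by omega)
      have hsplit : Complex.exp (((m + 1 : ℕ) : ℂ) * (c * ((k : ℂ) / n₂ - (j : ℂ) / n₁)))
          = Complex.exp (c * ((-((m : ℤ) + 1) : ℤ) : ℂ) * j / n₁)
            * Complex.exp (c * (((m : ℤ) + 1 : ℤ) : ℂ) * k / n₂) := by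
        rw [← Complex.exp_add]
        congr 1
        push_cast
        field_simp
        ring
      rw [mul_pow, ← Complex.exp_nat_mul, hsplit]
      ring
    rw [Finset.sum_congr rfl (fun j hj => Finset.sum_congr rfl (step1 j hj)),
      ← Finset.sum_mul_sum, ← Finset.mul_sum,
      sum_exp_icc n₁ h₁ (-((m : ℤ) + 1)), sum_exp_icc n₂ h₂ ((m : ℤ) + 1)]
    simp only [dvd_neg]
    have hdd : μ ∣ (m + 1) ↔ ((n₁ : ℤ) ∣ ((m : ℤ) + 1) ∧ (n₂ : ℤ) ∣ ((m : ℤ) + 1)) := by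
      rw [hμdef, Nat.lcm_dvd_iff]
      constructor
      · rintro ⟨ha, hb⟩; exact ⟨by exact_mod_cast Int.natCast_dvd_natCast.mpr ha,
          by exact_mod_cast Int.natCast_dvd_natCast.mpr hb⟩
      · rintro ⟨ha, hb⟩
        constructor
        · have := Int.natCast_dvd_natCast.mp (by exact_mod_cast ha : (n₁ : ℤ) ∣ ((m + 1 : ℕ) : ℤ))
          exact this
        · have := Int.natCast_dvd_natCast.mp (by exact_mod_cast hb : (n₂ : ℤ) ∣ ((m + 1 : ℕ) : ℤ))
          exact this
    by_cases hdvd : μ ∣ (m + 1)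
    · obtain ⟨ha, hb⟩ := hdd.mp hdvd
      rw [if_pos ha, if_pos hb, if_pos hdvd]; ring
    · rw [if_neg hdvd]
      rcases not_and_or.mp (fun h => hdvd (hdd.mpr h)) with h | h
      · rw [if_neg h]; ring
      · rw [if_neg h]; ring
  rw [funext hterm] at H
  -- second computation of the same series, via the injection t ↦ μ t + (μ - 1)
  have hqμ : ‖q ^ μ‖ < 1 := by
    rw [norm_pow]
    exact pow_lt_one₀ (norm_nonneg q) hq (by omega)
  have H2base := (key_geom hqμ).mul_left ((n₁ : ℂ) * n₂)
  have hi : Function.Injective (fun t : ℕ => μ * t + (μ - 1)) := by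
    intro a b hab
    simp only at hab
    have : μ * a = μ * b := by omega
    exact Nat.eq_of_mul_eq_mul_left (by omega) this
  have hrange : ∀ x, x ∉ Set.range (fun t : ℕ => μ * t + (μ - 1)) →
      (if μ ∣ (x + 1) then (n₁ : ℂ) * n₂ * q ^ (x + 1) else 0) = 0 := by
    intro x hx
    rw [if_neg]
    rintro ⟨s, hs⟩
    cases s with
    | zero => simp at hs
    | succ t =>
      rw [Nat.mul_succ] at hs
      exact hx ⟨t, by simp only []; omega⟩
  have hcomp : ((fun x => if μ ∣ (x + 1) then (n₁ : ℂ) * n₂ * q ^ (x + 1) else 0)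
      ∘ (fun t : ℕ => μ * t + (μ - 1)))
      = fun t : ℕ => (n₁ : ℂ) * n₂ * (q ^ μ) ^ (t + 1) := by
    funext t
    simp only [Function.comp_apply]
    rw [if_pos ⟨t + 1, by rw [Nat.mul_succ]; omega⟩, ← pow_mul]
    congr 2
    rw [Nat.mul_succ]
    omega
  have H2 : HasSum (fun x : ℕ => if μ ∣ (x + 1) then (n₁ : ℂ) * n₂ * q ^ (x + 1) else 0)
      ((n₁ : ℂ) * n₂ * (q ^ μ / (1 - q ^ μ))) := by
    rw [← hi.hasSum_iff hrange, hcomp]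
    exact H2base
  have := H.unique H2
  rw [this, mul_div_assoc]
end

section
/- Let n ≥ 1 be an integer, let θ̇_{1,0}, θ̇_{2,0}, c₂ be real numbers, and set c = 1 + θ̇_{2,0} − θ̇_{1,0} and b = n − 1 − c₂ + c. Assume c is not a non-positive integer and b ∉ {0, −1, …, −(n−1)}. Suppose q_1, …, q_n are pairwise distinct complex numbers, each different from 0 and 1, satisfying for every 1 ≤ k ≤ n the balance equation Σ_{1≤j≤n, j≠k} 2 q_k/(q_k − q_j) − c₂ q_k/(q_k − 1) + c = 0. Then ∏_{k=1}^{n} (z − q_k) = (−1)^n ((c)_n/(b)_n) · ₂F₁(−n, b; c; z); in particular, q_1, …, q_n are exactly the roots of the hypergeometric polynomial ₂F₁(−n, b; c; z). -/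
/-- The ascending Pochhammer symbol `(x)_k = x (x+1) ⋯ (x+k-1)`, with `(x)_0 = 1`. -/
noncomputable def poch (x : ℂ) (k : ℕ) : ℂ := ∏ i ∈ Finset.range k, (x + (i : ℂ))

/-- The hypergeometric polynomial
`₂F₁(-n, b; c; z) = Σ_{k=0}^{n} (-1)^k binom(n,k) ((b)_k/(c)_k) z^k`. -/
noncomputable def hyp2F1 (n : ℕ) (b c : ℂ) : Polynomial ℂ :=
  ∑ k ∈ Finset.range (n + 1),
    Polynomial.C ((-1) ^ k * (n.choose k : ℂ) * poch b k / poch c k) * Polynomial.X ^ k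

open Polynomial

lemma poch_succ (x : ℂ) (k : ℕ) : poch x (k+1) = poch x k * (x + k) :=
  Finset.prod_range_succ _ _

noncomputable def Lop (β γ δ : ℂ) (y : Polynomial ℂ) : Polynomial ℂ :=
  X * (X * (derivative (derivative y)))
    - X * derivative (derivative y)
    + C β * (X * derivative y)
    - C γ * derivative y - C δ * y

lemma coeff_X_mul' (p : Polynomial ℂ) (k : ℕ) :
    (X * p).coeff k = if k = 0 then 0 else p.coeff (k-1) := by
  cases k with
  | zero => simp
  | succ m => simp [Polynomial.coeff_X_mul]

lemma Lop_coeff (β γ δ : ℂ) (y : Polynomial ℂ) (k : ℕ) :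
    (Lop β γ δ y).coeff k
      = ((k:ℂ)*((k:ℂ)-1) + β*(k:ℂ) - δ) * y.coeff k
        - ((k:ℂ)+1)*((k:ℂ)+γ) * y.coeff (k+1) := by
  match k with
  | 0 => simp [Lop, coeff_X_mul', Polynomial.coeff_derivative]; ring
  | 1 => simp [Lop, coeff_X_mul', Polynomial.coeff_derivative]; ring
  | (m+2) => simp [Lop, coeff_X_mul', Polynomial.coeff_derivative]; ring

lemma deriv_prod {ι : Type*} [DecidableEq ι] (s : Finset ι) (f : ι → ℂ) :
    derivative (∏ j ∈ s, (X - C (f j)))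
      = ∑ j ∈ s, ∏ l ∈ s.erase j, (X - C (f l)) := by
  induction s using Finset.induction with
  | empty => simp
  | insert a s ha ih =>
    rw [Finset.prod_insert ha, derivative_mul, ih, Finset.sum_insert ha,
      Finset.erase_insert ha]
    simp only [derivative_sub, derivative_X, derivative_C, sub_zero, one_mul]
    rw [Finset.mul_sum]
    congr 1
    refine Finset.sum_congr rfl fun j hj => ?_
    rw [Finset.erase_insert_of_ne (by rintro rfl; exact ha hj),
      Finset.prod_insert (fun h => ha (Finset.mem_of_mem_erase h))]

/-!
STATEMENT 9: With `c = 1 + θ̇_{2,0} - θ̇_{1,0}` and `b = n - 1 - c₂ + c`, `c` not a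
non-positive integer and `b ∉ {0, -1, …, -(n-1)}`, if pairwise distinct
`q_1, …, q_n ∈ ℂ \ {0, 1}` satisfy the balance equations
`Σ_{j ≠ k} 2 q_k/(q_k - q_j) - c₂ q_k/(q_k - 1) + c = 0`, then
`∏ (z - q_k) = (-1)^n ((c)_n/(b)_n) ₂F₁(-n, b; c; z)`; in particular the `q_k` are
exactly the roots of `₂F₁(-n, b; c; z)`.
-/
theorem stmt_9 (n : ℕ) (hn : 1 ≤ n) (θ10 θ20 c₂ b c : ℝ)
    (hcdef : c = 1 + θ20 - θ10) (hbdef : b = (n : ℝ) - 1 - c₂ + c)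
    (hc : ∀ m : ℕ, c ≠ -(m : ℝ))
    (hb : ∀ m : ℕ, m < n → b ≠ -(m : ℝ))
    (q : Fin n → ℂ) (hinj : Function.Injective q)
    (hq0 : ∀ k, q k ≠ 0) (hq1 : ∀ k, q k ≠ 1)
    (hbal : ∀ k, (∑ j ∈ Finset.univ.erase k, 2 * q k / (q k - q j))
      - (c₂ : ℂ) * q k / (q k - 1) + (c : ℂ) = 0) :
    ∏ k, (Polynomial.X - Polynomial.C (q k))
      = Polynomial.C ((-1) ^ n * poch (c : ℂ) n / poch (b : ℂ) n)
        * hyp2F1 n (b : ℂ) (c : ℂ) := by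
  classical
  -- basic nonvanishing facts
  have hbC : (b : ℂ) = (n : ℂ) - 1 - (c₂ : ℂ) + (c : ℂ) := by
    rw [hbdef]; push_cast; ring
  have hcne : ∀ k : ℕ, (c : ℂ) + (k : ℂ) ≠ 0 := by
    intro k h
    have : ((c + (k:ℝ) : ℝ) : ℂ) = 0 := by push_cast; linear_combination h
    exact hc k (by linarith [Complex.ofReal_eq_zero.mp this])
  have hbne : ∀ k : ℕ, k < n → (b : ℂ) + (k : ℂ) ≠ 0 := by
    intro k hk h
    have : ((b + (k:ℝ) : ℝ) : ℂ) = 0 := by push_cast; linear_combination h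
    exact hb k hk (by linarith [Complex.ofReal_eq_zero.mp this])
  have hpochc : ∀ k : ℕ, poch (c : ℂ) k ≠ 0 := fun k =>
    Finset.prod_ne_zero_iff.2 fun i _ => hcne i
  have hpochb : ∀ k : ℕ, k ≤ n → poch (b : ℂ) k ≠ 0 := fun k hk =>
    Finset.prod_ne_zero_iff.2 fun i hi =>
      hbne i (lt_of_lt_of_le (Finset.mem_range.mp hi) hk)
  have hqne : ∀ k j : Fin n, j ≠ k → q k - q j ≠ 0 := fun k j hjk =>
    sub_ne_zero.2 fun h => hjk (hinj h.symm)
  have hq1' : ∀ k, q k - 1 ≠ 0 := fun k => sub_ne_zero.2 (hq1 k)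
  set P : Polynomial ℂ := ∏ k, (X - C (q k)) with hP
  have hPmonic : P.Monic := monic_prod_of_monic _ _ fun k _ => monic_X_sub_C (q k)
  have hPdeg : P.natDegree = n := by
    rw [hP, natDegree_prod _ _ fun k _ => X_sub_C_ne_zero (q k)]
    simp
  have hPn : P.coeff n = 1 := by
    have := hPmonic.coeff_natDegree
    rwa [hPdeg] at this
  have hPhigh : ∀ m, n < m → P.coeff m = 0 := fun m hm =>
    coeff_eq_zero_of_natDegree_lt (hPdeg ▸ hm)
  -- the operator applied to P vanishes at each q k
  have hevalLP : ∀ k, (Lop ((c:ℂ)-(c₂:ℂ)) (c:ℂ) ((n:ℂ)*(b:ℂ)) P).eval (q k) = 0 := by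
    intro k
    set A := q k with hA
    set s : Finset (Fin n) := Finset.univ.erase k with hs
    set G : Polynomial ℂ := ∏ j ∈ s, (X - C (q j)) with hG
    have hPG : P = (X - C A) * G := by
      rw [hP, hG, hs, ← Finset.mul_prod_erase Finset.univ _ (Finset.mem_univ k)]
    have hGA : G.eval A = ∏ j ∈ s, (A - q j) := by
      simp [hG, eval_prod]
    have hG'A : (derivative G).eval A = ∑ j ∈ s, ∏ l ∈ s.erase j, (A - q l) := by
      rw [hG, deriv_prod]
      simp [eval_finset_sum, eval_prod]
    have hP' : derivative P = G + (X - C A) * derivative G := by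
      rw [hPG, derivative_mul]; simp
    have hP'' : derivative (derivative P) =
        2 * derivative G + (X - C A) * derivative (derivative G) := by
      rw [hP', derivative_add, derivative_mul]; simp; ring
    have evalP : P.eval A = 0 := by simp [hPG]
    have evalP' : (derivative P).eval A = G.eval A := by simp [hP']
    have evalP'' : (derivative (derivative P)).eval A = 2 * (derivative G).eval A := by
      simp [hP'']
    -- balance manipulation
    have hsum : (∑ j ∈ s, 2 * A / (A - q j)) = (c₂ : ℂ) * A / (A - 1) - c := by
      have := hbal k
      rw [← hs, ← hA] at this
      linear_combination this
    have hterm : ∀ j ∈ s, 2 * A * (A - 1) * ∏ l ∈ s.erase j, (A - q l)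
        = (2 * A / (A - q j)) * ((A - 1) * ∏ l ∈ s, (A - q l)) := by
      intro j hj
      have hjk : j ≠ k := Finset.ne_of_mem_erase hj
      have h1 : (∏ l ∈ s, (A - q l)) = (A - q j) * ∏ l ∈ s.erase j, (A - q l) :=
        (Finset.mul_prod_erase s _ hj).symm
      rw [h1]
      rw [div_mul_eq_mul_div, eq_div_iff (hqne k j hjk)]
      ring
    have h2 : 2 * A * (A - 1) * (derivative G).eval A
        = ((c₂ : ℂ) * A - (c : ℂ) * (A - 1)) * G.eval A := by
      rw [hG'A, Finset.mul_sum, Finset.sum_congr rfl hterm, ← Finset.sum_mul, hsum, hGA]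
      have e : (c₂ : ℂ) * A / (A - 1) * (A - 1) = c₂ * A := div_mul_cancel₀ _ (hq1' k)
      linear_combination (∏ l ∈ s, (A - q l)) * e
    have hfin : (Lop ((c:ℂ)-(c₂:ℂ)) (c:ℂ) ((n:ℂ)*(b:ℂ)) P).eval A =
        A * (A - 1) * (2 * (derivative G).eval A) + (((c:ℂ)-(c₂:ℂ)) * A - (c:ℂ)) * G.eval A := by
      simp [Lop, evalP, evalP', evalP'']
      ring
    rw [hfin]
    linear_combination h2
  -- hence Lop ((c:ℂ)-(c₂:ℂ)) (c:ℂ) ((n:ℂ)*(b:ℂ)) P = 0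
  have hLP : Lop ((c:ℂ)-(c₂:ℂ)) (c:ℂ) ((n:ℂ)*(b:ℂ)) P = 0 := by
    by_cases h0 : Lop ((c:ℂ)-(c₂:ℂ)) (c:ℂ) ((n:ℂ)*(b:ℂ)) P = 0
    · exact h0
    · refine Polynomial.eq_zero_of_natDegree_lt_card_of_eval_eq_zero _ hinj hevalLP ?_
      rw [Fintype.card_fin]
      have hco : ∀ m : ℕ, n ≤ m → (Lop ((c:ℂ)-(c₂:ℂ)) (c:ℂ) ((n:ℂ)*(b:ℂ)) P).coeff m = 0 := by
        intro m hm
        rw [Lop_coeff]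
        rcases eq_or_lt_of_le hm with heq | hm'
        · rw [← heq, hPhigh (n+1) (by omega), hPn]
          have h0 : ((n:ℂ)*((n:ℂ)-1) + ((c:ℂ)-(c₂:ℂ))*(n:ℂ) - (n:ℂ)*(b:ℂ)) = 0 := by
            rw [hbC]; ring
          rw [h0]; ring
        · rw [hPhigh m hm', hPhigh (m+1) (by omega)]; ring
      have hdlt : (Lop ((c:ℂ)-(c₂:ℂ)) (c:ℂ) ((n:ℂ)*(b:ℂ)) P).degree < (n : ℕ) := by
        exact Polynomial.degree_lt_iff_coeff_zero _ _ |>.2 fun m hm =>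
          hco m (by exact_mod_cast hm)
      exact Polynomial.natDegree_lt_iff_degree_lt h0 |>.2 hdlt
  -- recurrence for coefficients of P
  have hPrec : ∀ k : ℕ, ((k:ℂ) - n) * ((k:ℂ) + b) * P.coeff k
      = ((k:ℂ) + 1) * ((k:ℂ) + c) * P.coeff (k+1) := by
    intro k
    have h := congrArg (fun p => Polynomial.coeff p k) hLP
    simp only [Polynomial.coeff_zero] at h
    rw [Lop_coeff] at h
    have hq : ((k:ℂ)*((k:ℂ)-1) + ((c:ℂ)-(c₂:ℂ))*(k:ℂ) - (n:ℂ)*(b:ℂ)) = ((k:ℂ) - n) * ((k:ℂ) + b) := by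
      rw [hbC]; ring
    rw [hq] at h
    linear_combination h
  -- the right-hand side
  set A0 : ℂ := (-1) ^ n * poch (c : ℂ) n / poch (b : ℂ) n with hA0
  set R : Polynomial ℂ := C A0 * hyp2F1 n (b : ℂ) (c : ℂ) with hR
  have hRcoeff : ∀ k : ℕ, R.coeff k =
      if k ≤ n then A0 * ((-1) ^ k * (n.choose k : ℂ) * poch (b:ℂ) k / poch (c:ℂ) k)
      else 0 := by
    intro k
    rw [hR, coeff_C_mul, hyp2F1, finset_sum_coeff]
    simp only [coeff_C_mul, coeff_X_pow, mul_ite, mul_one, mul_zero]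
    simp [Finset.sum_ite_eq, Nat.lt_succ_iff]
  have hRn : R.coeff n = 1 := by
    rw [hRcoeff, if_pos le_rfl, hA0, Nat.choose_self]
    have h1 : ((-1:ℂ)) ^ n * (-1:ℂ) ^ n = 1 := by
      rw [← pow_add]; exact Even.neg_one_pow ⟨n, rfl⟩
    field_simp [hpochb n le_rfl, hpochc n]
    linear_combination h1
  have hRhigh : ∀ m, n < m → R.coeff m = 0 := by
    intro m hm
    rw [hRcoeff, if_neg (by omega)]
  have hRrec : ∀ k : ℕ, k < n → ((k:ℂ) - n) * ((k:ℂ) + b) * R.coeff k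
      = ((k:ℂ) + 1) * ((k:ℂ) + c) * R.coeff (k+1) := by
    intro k hk
    rw [hRcoeff, hRcoeff, if_pos (by omega), if_pos (by omega),
      poch_succ, poch_succ]
    have hch : ((n.choose (k+1) : ℂ)) * ((k:ℂ)+1) = (n.choose k : ℂ) * ((n:ℂ) - k) := by
      have h := Nat.choose_succ_right_eq n k
      have := congrArg (Nat.cast : ℕ → ℂ) h
      push_cast [Nat.cast_sub hk.le] at this
      linear_combination this
    have hA : ((k:ℂ) - n) * ((k:ℂ) + b) *
          ((-1)^k * (n.choose k : ℂ) * poch (b:ℂ) k / poch (c:ℂ) k)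
        = ((k:ℂ) + 1) * ((k:ℂ) + c) *
          ((-1)^(k+1) * (n.choose (k+1) : ℂ) * (poch (b:ℂ) k * ((b:ℂ)+(k:ℂ)))
            / (poch (c:ℂ) k * ((c:ℂ)+(k:ℂ)))) := by
      rw [pow_succ, ← mul_div_assoc, ← mul_div_assoc,
        div_eq_div_iff (hpochc k) (mul_ne_zero (hpochc k) (hcne k))]
      linear_combination
        ((-1:ℂ)^k * poch (b:ℂ) k * ((c:ℂ)+(k:ℂ)) * ((b:ℂ)+(k:ℂ)) * poch (c:ℂ) k) * hch
    linear_combination A0 * hA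
  -- downward induction : coefficients agree
  have main : ∀ m : ℕ, P.coeff (n - m) = R.coeff (n - m) := by
    intro m
    induction m with
    | zero => simpa using hPn.trans hRn.symm
    | succ m ih =>
      rcases le_or_gt (m+1) n with h | h
      · set k := n - (m+1) with hk
        have hkn : k < n := by omega
        have hk1 : k + 1 = n - m := by omega
        have h1 := hPrec k
        have h2 := hRrec k hkn
        rw [hk1] at h1 h2
        have hne : ((k:ℂ) - n) * ((k:ℂ) + b) ≠ 0 := by
          refine mul_ne_zero ?_ (by rw [add_comm]; exact hbne k hkn)
          intro hkn0
          have : (k:ℂ) = n := by linear_combination hkn0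
          exact absurd (Nat.cast_injective this) (by omega)
        exact mul_left_cancel₀ hne (by rw [h1, h2, ih])
      · have : n - (m+1) = n - m := by omega
        rw [this]; exact ih
  rw [hP.symm, hR.symm] at *
  rw [← hR]
  ext k
  rcases le_or_gt k n with h | h
  · have := main (n - k)
    rwa [Nat.sub_sub_self h] at this
  · rw [hPhigh k h, hRhigh k h]
end

section
/- The configuration is balanced, i.e., F_{l,k} = 0 for all 1 ≤ l ≤ L and 1 ≤ k ≤ n_l, if and only if the polynomial 𝓕P is identically zero. -/
/-- `P_l(z) = ∏_{k=1}^{n_l} (z - q_{l,k})`; by convention `P_0 = P_{L+1} = 1`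
(empty products, since `n 0 = n (L+1) = 0`). -/
noncomputable def Ppoly (n : ℕ → ℕ) (q : ℕ → ℕ → ℂ) (l : ℕ) : Polynomial ℂ :=
  ∏ k ∈ Finset.Icc 1 (n l), (Polynomial.X - Polynomial.C (q l k))

/-- The polynomial `𝓕P`, with the exact quotients `P/P_l = ∏_{m ≠ l} P_m` and
`P/(P_l P_{l+1}) = ∏_{m ≠ l, l+1} P_m` written as products. -/
noncomputable def FPpoly (L : ℕ) (n : ℕ → ℕ) (c : ℕ → ℝ) (θ0 : ℕ → ℝ)
    (q : ℕ → ℕ → ℂ) : Polynomial ℂ :=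
  ∑ l ∈ Finset.Icc 1 L,
    (Polynomial.C ((c l : ℂ) ^ 2) * Polynomial.X * (Ppoly n q l).derivative.derivative
        * ∏ m ∈ (Finset.Icc 1 L).erase l, Ppoly n q m
      - Polynomial.C ((c l : ℂ) * (c (l + 1) : ℂ)) * Polynomial.X
        * (Ppoly n q l).derivative * (Ppoly n q (l + 1)).derivative
        * ∏ m ∈ ((Finset.Icc 1 L).erase l).erase (l + 1), Ppoly n q m
      + Polynomial.C ((c l : ℂ) ^ 2 + (c l : ℂ) * ((θ0 (l + 1) : ℂ) - (θ0 l : ℂ)))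
        * (Ppoly n q l).derivative
        * ∏ m ∈ (Finset.Icc 1 L).erase l, Ppoly n q m)

open Polynomial Finset

lemma eval_derivative_prod (s : Finset ℕ) (r : ℕ → ℂ) (z : ℂ) :
    Polynomial.eval z (Polynomial.derivative (∏ j ∈ s, (X - C (r j)))) =
      ∑ j ∈ s, ∏ i ∈ s.erase j, (z - r i) := by
  classical
  induction s using Finset.induction with
  | empty => simp
  | @insert a s ha ih =>
    rw [Finset.prod_insert ha, derivative_mul, derivative_sub, derivative_X, derivative_C,
      sub_zero, one_mul, Finset.sum_insert ha, Finset.erase_insert ha]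
    simp only [eval_add, eval_mul, eval_sub, eval_X, eval_C, ih, eval_prod]
    rw [Finset.mul_sum]
    congr 1
    refine Finset.sum_congr rfl fun j hj => ?_
    rw [Finset.erase_insert_of_ne (by rintro rfl; exact ha hj),
      Finset.prod_insert (fun h => ha (Finset.mem_of_mem_erase h))]

lemma eval_Ppoly (n : ℕ → ℕ) (q : ℕ → ℕ → ℂ) (m : ℕ) (z : ℂ) :
    Polynomial.eval z (Ppoly n q m) = ∏ j ∈ Finset.Icc 1 (n m), (z - q m j) := by
  simp [Ppoly, eval_prod]

lemma eval_deriv_Ppoly (n : ℕ → ℕ) (q : ℕ → ℕ → ℂ) (m : ℕ) (z : ℂ) :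
    Polynomial.eval z (Polynomial.derivative (Ppoly n q m)) =
      ∑ j ∈ Finset.Icc 1 (n m), ∏ i ∈ (Finset.Icc 1 (n m)).erase j, (z - q m i) :=
  eval_derivative_prod _ _ _

lemma Ppoly_factor (n : ℕ → ℕ) (q : ℕ → ℕ → ℂ) (l k : ℕ) (hk : k ∈ Finset.Icc 1 (n l)) :
    Ppoly n q l = (X - C (q l k)) * ∏ j ∈ (Finset.Icc 1 (n l)).erase k, (X - C (q l j)) :=
  (Finset.mul_prod_erase _ _ hk).symm

lemma eval_deriv_Ppoly_root (n : ℕ → ℕ) (q : ℕ → ℕ → ℂ) (l k : ℕ)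
    (hk : k ∈ Finset.Icc 1 (n l)) :
    Polynomial.eval (q l k) (Polynomial.derivative (Ppoly n q l)) =
      ∏ j ∈ (Finset.Icc 1 (n l)).erase k, (q l k - q l j) := by
  rw [Ppoly_factor n q l k hk, derivative_mul]
  simp [eval_prod]

lemma eval_deriv2_Ppoly_root (n : ℕ → ℕ) (q : ℕ → ℕ → ℂ) (l k : ℕ)
    (hk : k ∈ Finset.Icc 1 (n l)) :
    Polynomial.eval (q l k) (Polynomial.derivative (Polynomial.derivative (Ppoly n q l))) =
      2 * ∑ j ∈ (Finset.Icc 1 (n l)).erase k,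
        ∏ i ∈ ((Finset.Icc 1 (n l)).erase k).erase j, (q l k - q l i) := by
  rw [Ppoly_factor n q l k hk, derivative_mul, derivative_add, derivative_mul, derivative_mul]
  simp only [derivative_sub, derivative_X, derivative_C, sub_zero, derivative_one, one_mul,
    derivative_add, eval_add, eval_mul, eval_sub, eval_X, eval_C, sub_self, zero_mul, mul_zero,
    add_zero, zero_add, eval_derivative_prod]
  ring

lemma Ppoly_of_eq_zero (n : ℕ → ℕ) (q : ℕ → ℕ → ℂ) (m : ℕ) (h : n m = 0) :
    Ppoly n q m = 1 := by
  simp [Ppoly, h]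

lemma sum_div_mul (s : Finset ℕ) (r : ℕ → ℂ) (z a : ℂ) (hz : ∀ j ∈ s, z - r j ≠ 0) :
    (∑ j ∈ s, a / (z - r j)) * ∏ j ∈ s, (z - r j) =
      a * ∑ j ∈ s, ∏ i ∈ s.erase j, (z - r i) := by
  rw [Finset.sum_mul, Finset.mul_sum]
  refine Finset.sum_congr rfl fun j hj => ?_
  rw [← Finset.mul_prod_erase s _ hj]
  have hw := hz j hj
  field_simp

lemma key_eval (L : ℕ) (n : ℕ → ℕ) (hn0 : n 0 = 0) (hnL : n (L + 1) = 0)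
    (c : ℕ → ℝ) (θ0 : ℕ → ℝ) (q : ℕ → ℕ → ℂ)
    (hq : ∀ l ∈ Finset.Icc 1 L, ∀ k ∈ Finset.Icc 1 (n l), ∀ l' ∈ Finset.Icc 1 L,
      ∀ k' ∈ Finset.Icc 1 (n l'), (l, k) ≠ (l', k') → q l k ≠ q l' k')
    (l k : ℕ) (hl : l ∈ Finset.Icc 1 L) (hk : k ∈ Finset.Icc 1 (n l)) :
    Polynomial.eval (q l k) (FPpoly L n c θ0 q) =
      (∏ j ∈ (Finset.Icc 1 (n l)).erase k, (q l k - q l j)) *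
      (∏ m ∈ (Finset.Icc 1 L).erase l, ∏ j ∈ Finset.Icc 1 (n m), (q l k - q m j)) *
      force n c θ0 q l k := by
  classical
  set z := q l k with hz
  have hne : ∀ m ∈ Finset.Icc 1 L, ∀ j ∈ Finset.Icc 1 (n m), (l, k) ≠ (m, j) →
      z - q m j ≠ 0 := fun m hm j hj hp => sub_ne_zero_of_ne (hq l hl k hk m hm j hj hp)
  have hEl : Polynomial.eval z (Ppoly n q l) = 0 := by
    rw [eval_Ppoly]
    exact Finset.prod_eq_zero hk (sub_self z)
  set A : ℂ := ∏ j ∈ (Finset.Icc 1 (n l)).erase k, (z - q l j) with hA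
  set B : ℂ := ∏ m ∈ (Finset.Icc 1 L).erase l, ∏ j ∈ Finset.Icc 1 (n m), (z - q m j) with hB
  set Q2 : ℂ := Polynomial.eval z (Polynomial.derivative (Polynomial.derivative (Ppoly n q l)))
    with hQ2def
  set D1 : ℂ := Polynomial.eval z (Polynomial.derivative (Ppoly n q (l + 1))) with hD1
  set Dm : ℂ := Polynomial.eval z (Polynomial.derivative (Ppoly n q (l - 1))) with hDm
  set B2 : ℂ := ∏ m ∈ ((Finset.Icc 1 L).erase l).erase (l + 1),
      ∏ j ∈ Finset.Icc 1 (n m), (z - q m j) with hB2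
  set B3 : ℂ := ∏ m ∈ ((Finset.Icc 1 L).erase l).erase (l - 1),
      ∏ j ∈ Finset.Icc 1 (n m), (z - q m j) with hB3
  have hQ2 : Q2 = 2 * ∑ j ∈ (Finset.Icc 1 (n l)).erase k,
      ∏ i ∈ ((Finset.Icc 1 (n l)).erase k).erase j, (z - q l i) :=
    eval_deriv2_Ppoly_root n q l k hk
  have hlmem := Finset.mem_Icc.mp hl
  -- the value of the main (l-th) summand
  have hgl : Polynomial.eval z
      (Polynomial.C ((c l : ℂ) ^ 2) * Polynomial.X * (Ppoly n q l).derivative.derivative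
        * ∏ m ∈ (Finset.Icc 1 L).erase l, Ppoly n q m
      - Polynomial.C ((c l : ℂ) * (c (l + 1) : ℂ)) * Polynomial.X
        * (Ppoly n q l).derivative * (Ppoly n q (l + 1)).derivative
        * ∏ m ∈ ((Finset.Icc 1 L).erase l).erase (l + 1), Ppoly n q m
      + Polynomial.C ((c l : ℂ) ^ 2 + (c l : ℂ) * ((θ0 (l + 1) : ℂ) - (θ0 l : ℂ)))
        * (Ppoly n q l).derivative
        * ∏ m ∈ (Finset.Icc 1 L).erase l, Ppoly n q m) =
      (c l : ℂ) ^ 2 * z * Q2 * B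
        - (c l : ℂ) * (c (l + 1) : ℂ) * z * A * D1 * B2
        + ((c l : ℂ) ^ 2 + (c l : ℂ) * ((θ0 (l + 1) : ℂ) - (θ0 l : ℂ))) * A * B := by
    simp only [eval_add, eval_sub, eval_mul, eval_C, eval_X, eval_prod, eval_Ppoly,
      eval_deriv_Ppoly_root n q l k hk, ← hz, ← hA, ← hB, ← hB2, ← hQ2def, ← hD1]
    rw [show Polynomial.eval z (Polynomial.derivative (Ppoly n q l)) = A from
      eval_deriv_Ppoly_root n q l k hk]
    try ring
  -- the rest of the sum
  have hrest : (∑ l' ∈ (Finset.Icc 1 L).erase l, Polynomial.eval z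
      (Polynomial.C ((c l' : ℂ) ^ 2) * Polynomial.X * (Ppoly n q l').derivative.derivative
        * ∏ m ∈ (Finset.Icc 1 L).erase l', Ppoly n q m
      - Polynomial.C ((c l' : ℂ) * (c (l' + 1) : ℂ)) * Polynomial.X
        * (Ppoly n q l').derivative * (Ppoly n q (l' + 1)).derivative
        * ∏ m ∈ ((Finset.Icc 1 L).erase l').erase (l' + 1), Ppoly n q m
      + Polynomial.C ((c l' : ℂ) ^ 2 + (c l' : ℂ) * ((θ0 (l' + 1) : ℂ) - (θ0 l' : ℂ)))
        * (Ppoly n q l').derivative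
        * ∏ m ∈ (Finset.Icc 1 L).erase l', Ppoly n q m)) =
      -((c (l - 1) : ℂ) * (c l : ℂ) * z * Dm * A * B3) := by
    by_cases hl2 : 2 ≤ l
    · have hsucc : l - 1 + 1 = l := by omega
      have hmem : l - 1 ∈ (Finset.Icc 1 L).erase l := by
        rw [Finset.mem_erase, Finset.mem_Icc]; omega
      rw [Finset.sum_eq_single_of_mem (l - 1) hmem ?side]
      · have h1 : Polynomial.eval z (∏ m ∈ (Finset.Icc 1 L).erase (l - 1), Ppoly n q m) = 0 := by
          rw [eval_prod]
          refine Finset.prod_eq_zero (i := l) ?_ hEl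
          rw [Finset.mem_erase]; exact ⟨by omega, hl⟩
        rw [eval_add, eval_sub]
        simp only [eval_mul, eval_C, eval_X, h1, mul_zero]
        rw [hsucc, eval_deriv_Ppoly_root n q l k hk, ← hz, ← hA, ← hDm]
        rw [Finset.erase_right_comm (a := l - 1) (b := l)]
        simp only [eval_prod, eval_Ppoly, ← hz, ← hB3]
        ring
      · intro l' hl' hne'
        have hl'm := Finset.mem_erase.mp hl'
        have h1 : Polynomial.eval z (∏ m ∈ (Finset.Icc 1 L).erase l', Ppoly n q m) = 0 := by
          rw [eval_prod]
          exact Finset.prod_eq_zero (Finset.mem_erase.mpr ⟨(hl'm.1).symm, hl⟩) hEl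
        have h2 : Polynomial.eval z
            (∏ m ∈ ((Finset.Icc 1 L).erase l').erase (l' + 1), Ppoly n q m) = 0 := by
          rw [eval_prod]
          refine Finset.prod_eq_zero (i := l) ?_ hEl
          rw [Finset.mem_erase, Finset.mem_erase]
          refine ⟨?_, (hl'm.1).symm, hl⟩
          intro h; apply hne'; omega
        rw [eval_add, eval_sub]
        simp only [eval_mul, eval_C, eval_X, h1, h2, mul_zero]
        ring
    · -- l = 1
      have hDm0 : Dm = 0 := by
        rw [hDm, show l - 1 = 0 from by omega, Ppoly_of_eq_zero n q 0 hn0]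
        simp
      rw [hDm0]
      rw [Finset.sum_eq_zero]
      · ring
      intro l' hl'
      have hl'm := Finset.mem_erase.mp hl'
      have hl'Icc := Finset.mem_Icc.mp hl'm.2
      have h1 : Polynomial.eval z (∏ m ∈ (Finset.Icc 1 L).erase l', Ppoly n q m) = 0 := by
        rw [eval_prod]
        exact Finset.prod_eq_zero (Finset.mem_erase.mpr ⟨(hl'm.1).symm, hl⟩) hEl
      have h2 : Polynomial.eval z
          (∏ m ∈ ((Finset.Icc 1 L).erase l').erase (l' + 1), Ppoly n q m) = 0 := by
        rw [eval_prod]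
        refine Finset.prod_eq_zero (i := l) ?_ hEl
        rw [Finset.mem_erase, Finset.mem_erase]
        exact ⟨by omega, (hl'm.1).symm, hl⟩
      rw [eval_add, eval_sub]
      simp only [eval_mul, eval_C, eval_X, h1, h2, mul_zero]
      ring
  have hLHS : Polynomial.eval z (FPpoly L n c θ0 q) =
      (c l : ℂ) ^ 2 * z * Q2 * B
        - (c l : ℂ) * (c (l + 1) : ℂ) * z * A * D1 * B2
        + ((c l : ℂ) ^ 2 + (c l : ℂ) * ((θ0 (l + 1) : ℂ) - (θ0 l : ℂ))) * A * B
        - (c (l - 1) : ℂ) * (c l : ℂ) * z * Dm * A * B3 := by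
    rw [FPpoly, eval_finset_sum, ← Finset.add_sum_erase _ _ hl, hgl, hrest]
    ring
  -- now the force side
  have hS1 : (∑ j ∈ (Finset.Icc 1 (n l)).erase k, 2 * (c l : ℂ) ^ 2 * z / (z - q l j)) * A =
      (c l : ℂ) ^ 2 * z * Q2 := by
    rw [hA, sum_div_mul _ _ _ _ (fun j hj => hne l hl j (Finset.mem_of_mem_erase hj)
      (by simp [Ne, Prod.ext_iff]; intro h; exact absurd h.symm (Finset.mem_erase.mp hj).1)),
      hQ2]
    ring
  have hS2 : (∑ j ∈ Finset.Icc 1 (n (l + 1)),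
      (c l : ℂ) * (c (l + 1) : ℂ) * z / (z - q (l + 1) j)) * B =
      (c l : ℂ) * (c (l + 1) : ℂ) * z * D1 * B2 := by
    by_cases hlL : l = L
    · have hD10 : D1 = 0 := by
        rw [hD1, hlL, Ppoly_of_eq_zero n q (L + 1) hnL]
        simp
      have h0 : n (l + 1) = 0 := by rw [hlL]; exact hnL
      rw [hD10, show Finset.Icc 1 (n (l + 1)) = ∅ from by
        rw [h0]; exact Finset.Icc_eq_empty (by omega)]
      simp
    · have hmem1 : l + 1 ∈ (Finset.Icc 1 L).erase l := by
        rw [Finset.mem_erase, Finset.mem_Icc]; omega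
      have hmemIcc : l + 1 ∈ Finset.Icc 1 L := Finset.mem_of_mem_erase hmem1
      have hBfact : B = (∏ j ∈ Finset.Icc 1 (n (l + 1)), (z - q (l + 1) j)) * B2 := by
        rw [hB, hB2, ← Finset.mul_prod_erase _ _ hmem1]
      have hsum := sum_div_mul (Finset.Icc 1 (n (l + 1))) (q (l + 1)) z
        ((c l : ℂ) * (c (l + 1) : ℂ) * z)
        (fun j hj => hne (l + 1) hmemIcc j hj
          (by simp only [Ne, Prod.mk.injEq, not_and]; intro h; omega))
      rw [hBfact, ← mul_assoc, hsum, hD1, eval_deriv_Ppoly]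
  have hS3 : (∑ j ∈ Finset.Icc 1 (n (l - 1)),
      (c l : ℂ) * (c (l - 1) : ℂ) * z / (z - q (l - 1) j)) * B =
      (c l : ℂ) * (c (l - 1) : ℂ) * z * Dm * B3 := by
    by_cases hl2 : 2 ≤ l
    · have hmem1 : l - 1 ∈ (Finset.Icc 1 L).erase l := by
        rw [Finset.mem_erase, Finset.mem_Icc]; omega
      have hmemIcc : l - 1 ∈ Finset.Icc 1 L := Finset.mem_of_mem_erase hmem1
      have hBfact : B = (∏ j ∈ Finset.Icc 1 (n (l - 1)), (z - q (l - 1) j)) * B3 := by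
        rw [hB, hB3, ← Finset.mul_prod_erase _ _ hmem1]
      have hsum := sum_div_mul (Finset.Icc 1 (n (l - 1))) (q (l - 1)) z
        ((c l : ℂ) * (c (l - 1) : ℂ) * z)
        (fun j hj => hne (l - 1) hmemIcc j hj
          (by simp only [Ne, Prod.mk.injEq, not_and]; intro h; omega))
      rw [hBfact, ← mul_assoc, hsum, hDm, eval_deriv_Ppoly]
    · have hDm0 : Dm = 0 := by
        rw [hDm, show l - 1 = 0 from by omega, Ppoly_of_eq_zero n q 0 hn0]
        simp
      rw [hDm0, show Finset.Icc 1 (n (l - 1)) = ∅ from by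
        rw [show l - 1 = 0 from by omega, hn0]; exact Finset.Icc_eq_empty (by omega)]
      simp
  rw [hLHS, force, ← hz]
  linear_combination A * hS2 + A * hS3 - B * hS1

lemma natDegree_Ppoly (n : ℕ → ℕ) (q : ℕ → ℕ → ℂ) (m : ℕ) :
    (Ppoly n q m).natDegree = n m := by
  rw [Ppoly, Polynomial.natDegree_prod _ _ (fun i _ => X_sub_C_ne_zero _)]
  simp [natDegree_X_sub_C]

lemma Ppoly_ne_zero (n : ℕ → ℕ) (q : ℕ → ℕ → ℂ) (m : ℕ) : Ppoly n q m ≠ 0 :=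
  (monic_prod_of_monic _ _ (fun i _ => monic_X_sub_C _)).ne_zero

lemma natDegree_prod_Ppoly (n : ℕ → ℕ) (q : ℕ → ℕ → ℂ) (s : Finset ℕ) :
    (∏ m ∈ s, Ppoly n q m).natDegree = ∑ m ∈ s, n m := by
  rw [Polynomial.natDegree_prod _ _ (fun i _ => Ppoly_ne_zero n q i)]
  exact Finset.sum_congr rfl fun m _ => natDegree_Ppoly n q m

lemma natDegree_FPpoly_le (L : ℕ) (n : ℕ → ℕ) (c : ℕ → ℝ) (θ0 : ℕ → ℝ) (q : ℕ → ℕ → ℂ)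
    (hn : ∀ l, 1 ≤ l → l ≤ L → 0 < n l) (hnL : n (L + 1) = 0) :
    (FPpoly L n c θ0 q).natDegree ≤ (∑ m ∈ Finset.Icc 1 L, n m) - 1 := by
  classical
  set N := ∑ m ∈ Finset.Icc 1 L, n m with hN
  apply natDegree_sum_le_of_forall_le
  intro l hl
  have hlm := Finset.mem_Icc.mp hl
  have hnl : 0 < n l := hn l hlm.1 hlm.2
  have hNl : n l + ∑ m ∈ (Finset.Icc 1 L).erase l, n m = N := Finset.add_sum_erase _ _ hl
  have hd1 : ((Ppoly n q l).derivative).natDegree ≤ n l - 1 :=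
    (natDegree_derivative_le _).trans (by rw [natDegree_Ppoly])
  have hQ : (∏ m ∈ (Finset.Icc 1 L).erase l, Ppoly n q m).natDegree
      = ∑ m ∈ (Finset.Icc 1 L).erase l, n m := natDegree_prod_Ppoly n q _
  have b1 : (Polynomial.C ((c l : ℂ) ^ 2) * Polynomial.X * (Ppoly n q l).derivative.derivative
      * ∏ m ∈ (Finset.Icc 1 L).erase l, Ppoly n q m).natDegree ≤ N - 1 := by
    by_cases h1 : n l = 1
    · have hP : Ppoly n q l = X - Polynomial.C (q l 1) := by
        rw [Ppoly, h1, Finset.Icc_self, Finset.prod_singleton]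
      have : (Ppoly n q l).derivative.derivative = 0 := by
        rw [hP]; simp
      rw [this, mul_zero, zero_mul, natDegree_zero]
      exact Nat.zero_le _
    · have hd2 : ((Ppoly n q l).derivative.derivative).natDegree ≤ n l - 2 :=
        (natDegree_derivative_le _).trans (by omega)
      refine (natDegree_mul_le).trans ?_
      refine le_trans (add_le_add (natDegree_mul_le) le_rfl) ?_
      refine le_trans (add_le_add (add_le_add natDegree_mul_le hd2) hQ.le) ?_
      simp only [natDegree_C, natDegree_X]
      omega
  have b2 : (Polynomial.C ((c l : ℂ) * (c (l + 1) : ℂ)) * Polynomial.X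
      * (Ppoly n q l).derivative * (Ppoly n q (l + 1)).derivative
      * ∏ m ∈ ((Finset.Icc 1 L).erase l).erase (l + 1), Ppoly n q m).natDegree ≤ N - 1 := by
    by_cases hlL : l = L
    · have : (Ppoly n q (l + 1)).derivative = 0 := by
        rw [hlL, Ppoly_of_eq_zero n q (L + 1) hnL]; simp
      rw [this, mul_zero, zero_mul, natDegree_zero]
      exact Nat.zero_le _
    · have hmem1 : l + 1 ∈ (Finset.Icc 1 L).erase l := by
        rw [Finset.mem_erase, Finset.mem_Icc]; omega
      have hnl1 : 0 < n (l + 1) := hn (l + 1) (by omega) (by omega)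
      have hNl2 : n (l + 1) + ∑ m ∈ ((Finset.Icc 1 L).erase l).erase (l + 1), n m
          = ∑ m ∈ (Finset.Icc 1 L).erase l, n m := Finset.add_sum_erase _ _ hmem1
      have hd1' : ((Ppoly n q (l + 1)).derivative).natDegree ≤ n (l + 1) - 1 :=
        (natDegree_derivative_le _).trans (by rw [natDegree_Ppoly])
      have hQ2 : (∏ m ∈ ((Finset.Icc 1 L).erase l).erase (l + 1), Ppoly n q m).natDegree
          = ∑ m ∈ ((Finset.Icc 1 L).erase l).erase (l + 1), n m := natDegree_prod_Ppoly n q _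
      refine (natDegree_mul_le).trans ?_
      refine le_trans (add_le_add natDegree_mul_le hQ2.le) ?_
      refine le_trans (add_le_add (add_le_add natDegree_mul_le hd1') le_rfl) ?_
      refine le_trans (add_le_add (add_le_add (add_le_add natDegree_mul_le hd1) le_rfl) le_rfl) ?_
      simp only [natDegree_C, natDegree_X]
      omega
  have b3 : (Polynomial.C ((c l : ℂ) ^ 2 + (c l : ℂ) * ((θ0 (l + 1) : ℂ) - (θ0 l : ℂ)))
      * (Ppoly n q l).derivative
      * ∏ m ∈ (Finset.Icc 1 L).erase l, Ppoly n q m).natDegree ≤ N - 1 := by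
    refine (natDegree_mul_le).trans ?_
    refine le_trans (add_le_add ((natDegree_mul_le).trans (add_le_add le_rfl hd1)) hQ.le) ?_
    simp only [natDegree_C]
    omega
  refine (natDegree_add_le _ _).trans ?_
  rw [max_le_iff]
  exact ⟨(natDegree_sub_le _ _).trans (by rw [max_le_iff]; exact ⟨b1, b2⟩), b3⟩


/-!
STATEMENT 14: With all the `q_{l,k}` pairwise distinct, the configuration is
balanced (`F_{l,k} = 0` for all `1 ≤ l ≤ L`, `1 ≤ k ≤ n_l`) if and only if the
polynomial `𝓕P` is identically zero.
-/
theorem stmt_14 (L : ℕ) (hL : 1 ≤ L) (n : ℕ → ℕ)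
    (hn0 : n 0 = 0) (hnL : n (L + 1) = 0)
    (hn : ∀ l, 1 ≤ l → l ≤ L → 0 < n l)
    (c : ℕ → ℝ) (hc0 : c 0 = 0) (hcL : c (L + 1) = 0)
    (θ0 : ℕ → ℝ) (q : ℕ → ℕ → ℂ)
    (hq : ∀ l ∈ Finset.Icc 1 L, ∀ k ∈ Finset.Icc 1 (n l), ∀ l' ∈ Finset.Icc 1 L,
      ∀ k' ∈ Finset.Icc 1 (n l'), (l, k) ≠ (l', k') → q l k ≠ q l' k') :
    (∀ l ∈ Finset.Icc 1 L, ∀ k ∈ Finset.Icc 1 (n l), force n c θ0 q l k = 0)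
      ↔ FPpoly L n c θ0 q = 0 := by
  classical
  set N := ∑ m ∈ Finset.Icc 1 L, n m with hNdef
  have h1L : (1 : ℕ) ∈ Finset.Icc 1 L := Finset.mem_Icc.mpr ⟨le_refl 1, hL⟩
  have hN1 : 1 ≤ N :=
    le_trans (hn 1 le_rfl hL) (Finset.single_le_sum (fun i _ => Nat.zero_le _) h1L)
  constructor
  · intro hbal
    apply Polynomial.eq_zero_of_natDegree_lt_card_of_eval_eq_zero' _
      ((((Finset.Icc 1 L).sigma (fun l => Finset.Icc 1 (n l))).image fun p => q p.1 p.2))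
    · intro x hx
      obtain ⟨p, hp, rfl⟩ := Finset.mem_image.mp hx
      obtain ⟨hp1, hp2⟩ := Finset.mem_sigma.mp hp
      rw [key_eval L n hn0 hnL c θ0 q hq p.1 p.2 hp1 hp2, hbal p.1 hp1 p.2 hp2, mul_zero]
    · have hcard : ((((Finset.Icc 1 L).sigma (fun l => Finset.Icc 1 (n l))).image
          fun p => q p.1 p.2)).card = N := by
        rw [Finset.card_image_of_injOn, Finset.card_sigma]
        · simp [Nat.card_Icc, hNdef]
        · intro p hp p' hp' hqq
          obtain ⟨hp1, hp2⟩ := Finset.mem_sigma.mp hp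
          obtain ⟨hp1', hp2'⟩ := Finset.mem_sigma.mp hp'
          by_contra hne
          exact hq p.1 hp1 p.2 hp2 p'.1 hp1' p'.2 hp2'
            (fun h => hne (Sigma.ext (congrArg Prod.fst h) (heq_of_eq (congrArg Prod.snd h)))) hqq
      rw [hcard]
      exact lt_of_le_of_lt (natDegree_FPpoly_le L n c θ0 q hn hnL) (by omega)
  · intro h0 l hl k hk
    have hkey := key_eval L n hn0 hnL c θ0 q hq l k hl hk
    rw [h0, eval_zero] at hkey
    have hA : (∏ j ∈ (Finset.Icc 1 (n l)).erase k, (q l k - q l j)) ≠ 0 := by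
      rw [Finset.prod_ne_zero_iff]
      intro j hj
      exact sub_ne_zero_of_ne (hq l hl k hk l hl j (Finset.mem_of_mem_erase hj)
        (by intro h; exact (Finset.mem_erase.mp hj).1 (congrArg Prod.snd h).symm))
    have hB : (∏ m ∈ (Finset.Icc 1 L).erase l,
        ∏ j ∈ Finset.Icc 1 (n m), (q l k - q m j)) ≠ 0 := by
      rw [Finset.prod_ne_zero_iff]
      intro m hm
      rw [Finset.prod_ne_zero_iff]
      intro j hj
      exact sub_ne_zero_of_ne (hq l hl k hk m (Finset.mem_of_mem_erase hm) j hj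
        (by intro h; exact (Finset.mem_erase.mp hm).1 (congrArg Prod.fst h).symm))
    rcases mul_eq_zero.mp hkey.symm with h | h
    · exact absurd h (mul_ne_zero hA hB)
    · exact h
end

section
/- The polynomial P divides the polynomial A·P'' + B·P' if and only if the balance equations Σ_{1≤j≤n, j≠k} 2/(q_k − q_j) + Σ_{i=0}^{p} ρ_i/(q_k − a_i) = 0 hold for every 1 ≤ k ≤ n. In particular, if the balance equations hold, then P solves a generalized Lamé (second-order Fuchsian) equation P''(z) + (Σ_{i=0}^{p} ρ_i/(z − a_i)) P'(z) + (V(z)/A(z)) P(z) = 0, where V = −(A·P'' + B·P')/P is a polynomial of degree at most p − 1. -/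
open Polynomial

/-!
STATEMENT 15: Heine–Stieltjes.  With `P = ∏ (z - q_k)`, `A = ∏ (z - a_i)` and
`B = Σ ρ_i ∏_{m ≠ i} (z - a_m)` (so `B/A = Σ ρ_i/(z - a_i)`), the polynomial `P`
divides `A·P'' + B·P'` if and only if the balance equations
`Σ_{j ≠ k} 2/(q_k - q_j) + Σ_i ρ_i/(q_k - a_i) = 0` hold for every `k`.
In particular, if they hold then `P` solves a generalized Lamé equation
`A·P'' + B·P' + V·P = 0` with a Van Vleck polynomial `V` of degree at most `p - 1`
(i.e. `deg V < p`).
-/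
lemma aux_derivative_prod {ι : Type*} [DecidableEq ι] (s : Finset ι) (f : ι → Polynomial ℂ) :
    Polynomial.derivative (∏ i ∈ s, f i)
      = ∑ i ∈ s, (∏ j ∈ s.erase i, f j) * Polynomial.derivative (f i) := by
  induction s using Finset.induction_on with
  | empty => simp
  | @insert a s ha ih =>
    rw [Finset.prod_insert ha, derivative_mul, ih, Finset.sum_insert ha,
      Finset.erase_insert ha, Finset.mul_sum, mul_comm (derivative (f a))]
    congr 1
    refine Finset.sum_congr rfl fun i hi => ?_
    have hne : i ≠ a := fun h => ha (h ▸ hi)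
    rw [Finset.erase_insert_of_ne hne.symm,
      Finset.prod_insert (fun h => ha (Finset.mem_of_mem_erase h)), mul_assoc]

theorem stmt_15 (p n : ℕ) (hn : 1 ≤ n)
    (a : Fin (p + 1) → ℂ) (ρ : Fin (p + 1) → ℂ) (ha : Function.Injective a)
    (q : Fin n → ℂ) (hq : Function.Injective q)
    (hqa : ∀ k i, q k ≠ a i)
    (P A B : Polynomial ℂ)
    (hP : P = ∏ k, (X - C (q k)))
    (hA : A = ∏ i, (X - C (a i)))
    (hB : B = ∑ i, C (ρ i) * ∏ m ∈ Finset.univ.erase i, (X - C (a m))) :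
    (P ∣ A * P.derivative.derivative + B * P.derivative ↔
        ∀ k, (∑ j ∈ Finset.univ.erase k, 2 / (q k - q j))
          + (∑ i, ρ i / (q k - a i)) = 0)
      ∧ ((∀ k, (∑ j ∈ Finset.univ.erase k, 2 / (q k - q j))
            + (∑ i, ρ i / (q k - a i)) = 0) →
          ∃ V : Polynomial ℂ, V.degree < (p : ℕ)
            ∧ A * P.derivative.derivative + B * P.derivative + V * P = 0) := by
  classical
  set F := A * P.derivative.derivative + B * P.derivative with hF
  have hAk : ∀ k, A.eval (q k) ≠ 0 := by
    intro k
    rw [hA]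
    simp only [eval_prod, eval_sub, eval_X, eval_C]
    exact Finset.prod_ne_zero_iff.mpr fun i _ => sub_ne_zero.mpr (hqa k i)
  have hQk : ∀ k, (∏ j ∈ Finset.univ.erase k, (q k - q j)) ≠ 0 := by
    intro k
    refine Finset.prod_ne_zero_iff.mpr fun j hj => sub_ne_zero.mpr ?_
    intro h
    exact (Finset.mem_erase.mp hj).1 (hq h).symm
  -- key evaluation formula
  have keyF : ∀ k, F.eval (q k) =
      A.eval (q k) * (∏ j ∈ Finset.univ.erase k, (q k - q j)) *
        ((∑ j ∈ Finset.univ.erase k, 2 / (q k - q j)) + ∑ i, ρ i / (q k - a i)) := by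
    intro k
    set Q : Polynomial ℂ := ∏ j ∈ Finset.univ.erase k, (X - C (q j)) with hQ
    have hPQ : P = (X - C (q k)) * Q := by
      rw [hP, hQ]
      exact (Finset.mul_prod_erase _ _ (Finset.mem_univ k)).symm
    have hP' : P.derivative = Q + (X - C (q k)) * Q.derivative := by
      rw [hPQ, derivative_mul]
      simp
    have hP'' : P.derivative.derivative
        = Q.derivative + (Q.derivative + (X - C (q k)) * Q.derivative.derivative) := by
      rw [hP', derivative_add, derivative_mul]
      simp
    have hQev : Q.eval (q k) = ∏ j ∈ Finset.univ.erase k, (q k - q j) := by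
      simp [hQ, eval_prod]
    have hQ'ev : Q.derivative.eval (q k)
        = (∏ j ∈ Finset.univ.erase k, (q k - q j))
            * ∑ j ∈ Finset.univ.erase k, 1 / (q k - q j) := by
      rw [hQ, aux_derivative_prod, eval_finset_sum, Finset.mul_sum]
      refine Finset.sum_congr rfl fun j hj => ?_
      have hne : q k - q j ≠ 0 :=
        sub_ne_zero.mpr fun h => (Finset.mem_erase.mp hj).1 (hq h).symm
      have h1 : (q k - q j) * ∏ m ∈ (Finset.univ.erase k).erase j, (q k - q m)
          = ∏ m ∈ Finset.univ.erase k, (q k - q m) := by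
        have := Finset.mul_prod_erase (Finset.univ.erase k) (fun m => q k - q m) hj
        simpa using this
      simp only [derivative_sub, derivative_X, derivative_C, sub_zero, mul_one, eval_mul,
        eval_prod, eval_sub, eval_X, eval_C]
      rw [mul_one_div, eq_div_iff hne, mul_comm]
      exact h1
    have hBev : B.eval (q k) = A.eval (q k) * ∑ i, ρ i / (q k - a i) := by
      rw [hB, hA]
      simp only [eval_finset_sum, eval_mul, eval_C, eval_prod, eval_sub, eval_X]
      rw [Finset.mul_sum]
      refine Finset.sum_congr rfl fun i _ => ?_
      have hne : q k - a i ≠ 0 := sub_ne_zero.mpr (hqa k i)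
      have h2 : (q k - a i) * ∏ m ∈ Finset.univ.erase i, (q k - a m)
          = ∏ m, (q k - a m) :=
        Finset.mul_prod_erase Finset.univ (fun m => q k - a m) (Finset.mem_univ i)
      field_simp
      linear_combination ρ i * h2
    have hev : F.eval (q k)
        = A.eval (q k) * (2 * Q.derivative.eval (q k)) + B.eval (q k) * Q.eval (q k) := by
      rw [hF, hP'', hP']
      simp only [eval_add, eval_mul, eval_sub, eval_X, eval_C, sub_self, zero_mul]
      ring
    rw [hev, hQev, hQ'ev, hBev]
    have h2S : (∑ j ∈ Finset.univ.erase k, 2 / (q k - q j))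
        = 2 * ∑ j ∈ Finset.univ.erase k, 1 / (q k - q j) := by
      rw [Finset.mul_sum]
      refine Finset.sum_congr rfl fun j _ => ?_
      ring
    rw [h2S]
    ring
  have hPeval : ∀ k, P.eval (q k) = 0 := by
    intro k
    rw [hP, eval_prod]
    exact Finset.prod_eq_zero (Finset.mem_univ k) (by simp)
  have hdvd : P ∣ F ↔ ∀ k, F.eval (q k) = 0 := by
    constructor
    · rintro ⟨g, hg⟩ k
      rw [hg, eval_mul, hPeval k, zero_mul]
    · intro h
      rw [hP]
      exact Fintype.prod_dvd_of_coprime (pairwise_coprime_X_sub_C hq)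
        fun k => dvd_iff_isRoot.mpr (h k)
  have part1 : P ∣ F ↔ ∀ k, (∑ j ∈ Finset.univ.erase k, 2 / (q k - q j))
      + (∑ i, ρ i / (q k - a i)) = 0 := by
    rw [hdvd]
    refine forall_congr' fun k => ?_
    rw [keyF k]
    constructor
    · intro h
      rcases mul_eq_zero.mp h with h | h
      · exact absurd h (mul_ne_zero (hAk k) (hQk k))
      · exact h
    · intro h; rw [h, mul_zero]
  refine ⟨part1, fun hbal => ?_⟩
  obtain ⟨g, hg⟩ := part1.mpr hbal
  -- degree facts
  have hPmonic : P.Monic := by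
    rw [hP]; exact monic_prod_of_monic _ _ fun k _ => monic_X_sub_C _
  have hAmonic : A.Monic := by
    rw [hA]; exact monic_prod_of_monic _ _ fun i _ => monic_X_sub_C _
  have hPdeg : P.natDegree = n := by
    rw [hP, natDegree_prod _ _ fun k _ => X_sub_C_ne_zero (q k)]
    simp
  have hAdeg : A.natDegree = p + 1 := by
    rw [hA, natDegree_prod _ _ fun i _ => X_sub_C_ne_zero (a i)]
    simp
  have hBdeg : B.natDegree ≤ p := by
    rw [hB]
    refine natDegree_sum_le_of_forall_le _ _ fun i _ => ?_
    refine (natDegree_mul_le).trans ?_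
    have : (∏ m ∈ Finset.univ.erase i, (X - C (a m))).natDegree ≤ p := by
      refine (natDegree_prod_le _ _).trans ?_
      simp [Finset.card_erase_of_mem]
    simpa using this
  have hFdeg : F.degree < ((n + p : ℕ) : WithBot ℕ) := by
    have h1 : (A * P.derivative.derivative).degree < ((n + p : ℕ) : WithBot ℕ) := by
      by_cases hz : P.derivative.derivative = 0
      · rw [hz, mul_zero, degree_zero]
        exact WithBot.bot_lt_coe _
      · have hn2 : 2 ≤ n := by
          by_contra hc
          have hd1 : P.derivative.natDegree = 0 := by
            have := natDegree_derivative_le P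
            omega
          obtain ⟨c, hc'⟩ := natDegree_eq_zero.mp hd1
          rw [← hc', derivative_C] at hz
          exact hz rfl
        have hdd : P.derivative.derivative.natDegree ≤ n - 2 := by
          have h1 := natDegree_derivative_le P
          have h2 := natDegree_derivative_le P.derivative
          omega
        have hnd : (A * P.derivative.derivative).natDegree ≤ n + p - 1 := by
          refine natDegree_mul_le.trans ?_
          rw [hAdeg]
          omega
        rw [degree_eq_natDegree (mul_ne_zero hAmonic.ne_zero hz)]
        exact_mod_cast lt_of_le_of_lt (Nat.cast_le.mpr hnd)
          (Nat.cast_lt.mpr (by omega : n + p - 1 < n + p))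
    have h2 : (B * P.derivative).degree < ((n + p : ℕ) : WithBot ℕ) := by
      by_cases hz : B * P.derivative = 0
      · rw [hz, degree_zero]
        exact WithBot.bot_lt_coe _
      · have hd1 : P.derivative.natDegree ≤ n - 1 := by
          have := natDegree_derivative_le P
          omega
        have hnd : (B * P.derivative).natDegree ≤ n + p - 1 := by
          refine natDegree_mul_le.trans ?_
          omega
        rw [degree_eq_natDegree hz]
        exact_mod_cast lt_of_le_of_lt (Nat.cast_le.mpr hnd)
          (Nat.cast_lt.mpr (by omega : n + p - 1 < n + p))
    exact lt_of_le_of_lt (degree_add_le _ _) (max_lt h1 h2)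
  refine ⟨-g, ?_, by rw [hg]; ring⟩
  rw [degree_neg]
  by_cases hg0 : g = 0
  · rw [hg0, degree_zero]
    exact WithBot.bot_lt_coe _
  · have hdm : F.degree = P.degree + g.degree := by rw [hg, degree_mul]
    rw [hdm, degree_eq_natDegree hPmonic.ne_zero, hPdeg,
      degree_eq_natDegree hg0] at hFdeg
    rw [degree_eq_natDegree hg0]
    have : n + g.natDegree < n + p := by exact_mod_cast hFdeg
    exact_mod_cast (by omega : g.natDegree < p)
end
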